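/- arXiv:math/9907021 — 6 statements merged into one kernel-verified Lean document; each statement's English description precedes it below -/
import Mathlib

section
/- Let (A, d) be a symmetrizable Cartan datum of rank r and let m be a positive integer; set M_i = m/gcd(m, 2·d_i). Then for all i, j the integer M_j divides M_i·A_{ij}, so that Ã_{ij} := (M_i/M_j)·A_{ij} is an integer; moreover Ã is again a symmetrizable Cartan datum: Ã_{ii} = 2, Ã_{ij} ≤ 0 for i ≠ j, and with the positive integers d̃_i := M_i²·d_i one has d̃_j·Ã_{ij} = d̃_i·Ã_{ji} for all i, j. -/
/-!
Write `gᵢ = gcd(m, 2dᵢ)`, so that `Mᵢ gᵢ = m`. Since `gᵢ` divides both `m Aᵢⱼ` and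
`2dⱼ Aᵢⱼ = 2dᵢ Aⱼᵢ`, it divides their gcd `gⱼ Aᵢⱼ`; multiplying through by `MᵢMⱼ` this is exactly
`Mⱼ ∣ Mᵢ Aᵢⱼ`. Hence `Ã = diag(M) A diag(M)⁻¹` is an integer matrix, and conjugating by a
positive diagonal matrix preserves the diagonal, the signs of the entries, and symmetrizability,
with `d` replaced by `M² d`.
-/

section Divisibility

variable {α : Type*} [CommMonoidWithZero α]

theorem gcd_dvd_gcd_mul_of_mul_eq_mul [GCDMonoid α] {m a b x y : α} (h : b * x = a * y) :
    gcd m a ∣ gcd m b * x := by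
  have h_mx : gcd m a ∣ m * x := (gcd_dvd_left m a).mul_right x
  have h_bx : gcd m a ∣ b * x := h ▸ (gcd_dvd_right m a).mul_right y
  exact (dvd_gcd h_mx h_bx).trans (gcd_mul_right' x m b).dvd

theorem dvd_mul_of_dvd_mul_of_mul_eq [IsRightCancelMulZero α] {m M N g h x : α} (hm : m ≠ 0)
    (hg : M * g = m) (hh : N * h = m) (hdvd : g ∣ h * x) : N ∣ M * x := by
  obtain ⟨c, hc⟩ := hdvd
  have hg0 : g ≠ 0 := right_ne_zero_of_mul (hg ▸ hm)
  refine ⟨c, mul_right_cancel₀ hg0 ?_⟩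
  calc M * x * g = (M * g) * x := by rw [mul_right_comm]
    _ = N * (h * x) := by rw [hg, ← hh, mul_assoc]
    _ = N * c * g := by rw [hc, mul_comm g c, mul_assoc]

end Divisibility

section DiagonalConjugation

variable {ι R : Type*} [CommRing R] [IsDomain R] {A B : ι → ι → R} {M : ι → R}

theorem diag_eq_of_mul_eq_mul_diag (hM : ∀ i, M i ≠ 0)
    (hB : ∀ i j, B i j * M j = M i * A i j) (i : ι) : B i i = A i i :=
  mul_right_cancel₀ (hM i) ((hB i i).trans (mul_comm _ _))

theorem symmetrizable_of_mul_eq_mul_diag (hM : ∀ i, M i ≠ 0)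
    (hB : ∀ i j, B i j * M j = M i * A i j) {d : ι → R}
    (hsym : ∀ i j, d j * A i j = d i * A j i) (i j : ι) :
    (M j ^ 2 * d j) * B i j = (M i ^ 2 * d i) * B j i := by
  apply mul_left_cancel₀ (mul_ne_zero (hM i) (hM j))
  linear_combination (M i * M j ^ 2 * d j) * hB i j - (M i ^ 2 * M j * d i) * hB j i
    + (M i * M j) ^ 2 * hsym i j

end DiagonalConjugation

/-- For a symmetrizable Cartan datum `(A, d)` of rank `r` and a positive
integer `m`, with `M i = m / gcd (m, 2 * d i)`, the integer `M j` divides `M i * A i j`,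
so `Ã i j = (M i / M j) * A i j` is an integer; moreover `Ã` is again a symmetrizable
Cartan datum with symmetrizing positive integers `d̃ i = (M i)^2 * d i`. -/
theorem stmt0 (r : ℕ) (A : Fin r → Fin r → ℤ) (d : Fin r → ℕ)
    (hd : ∀ i, 0 < d i)
    (hA2 : ∀ i, A i i = 2)
    (hAneg : ∀ i j, i ≠ j → A i j ≤ 0)
    (hsym : ∀ i j, (d j : ℤ) * A i j = (d i : ℤ) * A j i)
    (m : ℕ) (hm : 0 < m)
    (M : Fin r → ℕ) (hM : ∀ i, M i = m / Nat.gcd m (2 * d i))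
    (Atilde : Fin r → Fin r → ℤ)
    (hAtilde : ∀ i j, Atilde i j = (M i : ℤ) * A i j / (M j : ℤ)) :
    (∀ i j, (M j : ℤ) ∣ (M i : ℤ) * A i j) ∧
    (∀ i, Atilde i i = 2) ∧
    (∀ i j, i ≠ j → Atilde i j ≤ 0) ∧
    (∀ i, 0 < (M i) ^ 2 * d i) ∧
    (∀ i j, ((M j : ℤ) ^ 2 * (d j : ℤ)) * Atilde i j
      = ((M i : ℤ) ^ 2 * (d i : ℤ)) * Atilde j i) := by
  have hMg : ∀ i, M i * Nat.gcd m (2 * d i) = m := fun i =>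
    hM i ▸ Nat.div_mul_cancel (Nat.gcd_dvd_left _ _)
  have hMpos : ∀ i, 0 < M i := fun i =>
    Nat.pos_of_ne_zero fun h => hm.ne' (by simpa [h] using (hMg i).symm)
  have hMne : ∀ i, (M i : ℤ) ≠ 0 := fun i => by exact_mod_cast (hMpos i).ne'
  have hdvd : ∀ i j, (M j : ℤ) ∣ (M i : ℤ) * A i j := by
    intro i j
    have hg : (Nat.gcd m (2 * d i) : ℤ) ∣ Nat.gcd m (2 * d j) * A i j := by
      have := gcd_dvd_gcd_mul_of_mul_eq_mul (m := (m : ℤ)) (a := ((2 * d i : ℕ) : ℤ))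
        (b := ((2 * d j : ℕ) : ℤ)) (x := A i j) (y := A j i)
        (by push_cast; linear_combination 2 * hsym i j)
      rwa [← Int.coe_gcd, ← Int.coe_gcd, Int.gcd_natCast_natCast, Int.gcd_natCast_natCast] at this
    exact dvd_mul_of_dvd_mul_of_mul_eq (m := (m : ℤ)) (by exact_mod_cast hm.ne')
      (by exact_mod_cast hMg i) (by exact_mod_cast hMg j) hg
  have hB : ∀ i j, Atilde i j * M j = M i * A i j := fun i j =>
    hAtilde i j ▸ Int.ediv_mul_cancel (hdvd i j)
  refine ⟨hdvd, fun i => (diag_eq_of_mul_eq_mul_diag hMne hB i).trans (hA2 i),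
    fun i j hij => ?_, fun i => Nat.mul_pos (pow_pos (hMpos i) 2) (hd i),
    symmetrizable_of_mul_eq_mul_diag hMne hB hsym⟩
  have hMj : (0 : ℤ) < M j := by exact_mod_cast hMpos j
  refine nonpos_of_mul_nonpos_left ?_ hMj
  rw [hB i j]
  exact mul_nonpos_of_nonneg_of_nonpos (Int.natCast_nonneg _) (hAneg i j hij)
end

section
/- Let (A, d) be a symmetrizable Cartan datum of rank r such that every d_i lies in {1, d} for a fixed d ∈ {2, 3}, let m be a positive integer, and set M = m/gcd(m, 2). If d divides M, then the dual matrix is the transpose of A, i.e. Ã_{ij} = A_{ji} for all i, j; if d does not divide M, then Ã_{ij} = A_{ij} for all i, j. -/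
/-!
Write `N = m / gcd(m, 2)`. Since `m / gcd(m, k)` is the additive order of `k` in `ZMod m`, we get
`M_i = N / gcd(N, d_i)`; as `d_i ∈ {1, d}` with `d` prime, either `d ∣ N` and `M_i d_i = N` for
all `i`, or `d ∤ N` and `M_i = N` for all `i`. In the first case symmetrizability
`d_j A_ij = d_i A_ji` turns into `M_i A_ij = M_j A_ji`, i.e. `Ã = Aᵀ`; in the second `Ã = A`.
-/

theorem Nat.div_gcd_mul (m : ℕ) {a b : ℕ} (ha : a ≠ 0) (hb : b ≠ 0) :
    m / m.gcd (a * b) = m / m.gcd a / (m / m.gcd a).gcd b := by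
  rw [← ZMod.addOrderOf_coe' m (mul_ne_zero ha hb), ← ZMod.addOrderOf_coe' m ha,
    Nat.cast_mul, mul_comm, ← nsmul_eq_mul, addOrderOf_nsmul' _ hb]

theorem mul_ediv_eq_of_symmetrizable {ι : Type*} {A : ι → ι → ℤ} {d M : ι → ℕ}
    (hsym : ∀ i j, (d j : ℤ) * A i j = (d i : ℤ) * A j i) {c : ℕ} (hc : c ≠ 0)
    (hMd : ∀ i, M i * d i = c) (i j : ι) :
    (M i : ℤ) * A i j / M j = A j i := by
  have hdj : (d j : ℤ) ≠ 0 := by exact_mod_cast right_ne_zero_of_mul (hMd j ▸ hc)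
  have hMj : (M j : ℤ) ≠ 0 := by exact_mod_cast left_ne_zero_of_mul (hMd j ▸ hc)
  have hMdij : (M i : ℤ) * d i = M j * d j := by exact_mod_cast (hMd i).trans (hMd j).symm
  have hMA : (M i : ℤ) * A i j = M j * A j i := by
    refine mul_left_cancel₀ hdj ?_
    calc (d j : ℤ) * (M i * A i j) = M i * d i * A j i := by rw [mul_left_comm, hsym]; ring
      _ = d j * (M j * A j i) := by rw [hMdij]; ring
  rw [hMA, Int.mul_ediv_cancel_left _ hMj]

theorem stmt2_general (r : ℕ) (A : Fin r → Fin r → ℤ) (d : Fin r → ℕ)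
    (hd : ∀ i, 0 < d i)
    (hsym : ∀ i j, (d j : ℤ) * A i j = (d i : ℤ) * A j i)
    (dd : ℕ) (hdd : dd = 2 ∨ dd = 3)
    (hdval : ∀ i, d i = 1 ∨ d i = dd)
    (m : ℕ) (hm : 0 < m)
    (M : Fin r → ℕ) (hM : ∀ i, M i = m / Nat.gcd m (2 * d i))
    (Atilde : Fin r → Fin r → ℤ)
    (hAtilde : ∀ i j, Atilde i j = (M i : ℤ) * A i j / (M j : ℤ)) :
    (dd ∣ m / Nat.gcd m 2 → ∀ i j, Atilde i j = A j i) ∧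
    (¬ dd ∣ m / Nat.gcd m 2 → ∀ i j, Atilde i j = A i j) := by
  set N := m / m.gcd 2
  have hN : 0 < N := Nat.div_pos (Nat.gcd_le_left 2 hm) (Nat.gcd_pos_of_pos_left 2 hm)
  have hdd_prime : dd.Prime := by rcases hdd with rfl | rfl <;> norm_num
  have hMN : ∀ i, M i = N / N.gcd (d i) := fun i => by
    rw [hM, Nat.div_gcd_mul m two_ne_zero (hd i).ne']
  refine ⟨fun hdvd i j => ?_, fun hndvd i j => ?_⟩
  · have hMd : ∀ k, M k * d k = N := fun k => by
      rcases hdval k with h | h <;> rw [hMN, h]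
      · simp
      · rw [Nat.gcd_eq_right hdvd, Nat.div_mul_cancel hdvd]
    rw [hAtilde, mul_ediv_eq_of_symmetrizable hsym hN.ne' hMd]
  · have hMconst : ∀ k, M k = N := fun k => by
      rcases hdval k with h | h <;> rw [hMN, h]
      · simp
      · rw [Nat.coprime_comm.mp ((Nat.Prime.coprime_iff_not_dvd hdd_prime).mpr hndvd), Nat.div_one]
    rw [hAtilde, hMconst i, hMconst j, Int.mul_ediv_cancel_left _ (by positivity)]

/-- For a symmetrizable Cartan datum `(A, d)` with every `d i ∈ {1, dd}` for a
fixed `dd ∈ {2, 3}`, a positive integer `m`, and `M = m / gcd (m, 2)`: if `dd ∣ M` then the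
dual matrix `Ã i j = (M i / M j) * A i j` is the transpose of `A`, and otherwise `Ã = A`. -/
theorem stmt2 (r : ℕ) (A : Fin r → Fin r → ℤ) (d : Fin r → ℕ)
    (hd : ∀ i, 0 < d i)
    (hA2 : ∀ i, A i i = 2)
    (hAneg : ∀ i j, i ≠ j → A i j ≤ 0)
    (hsym : ∀ i j, (d j : ℤ) * A i j = (d i : ℤ) * A j i)
    (dd : ℕ) (hdd : dd = 2 ∨ dd = 3)
    (hdval : ∀ i, d i = 1 ∨ d i = dd)
    (m : ℕ) (hm : 0 < m)
    (M : Fin r → ℕ) (hM : ∀ i, M i = m / Nat.gcd m (2 * d i))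
    (Atilde : Fin r → Fin r → ℤ)
    (hAtilde : ∀ i j, Atilde i j = (M i : ℤ) * A i j / (M j : ℤ)) :
    (dd ∣ m / Nat.gcd m 2 → ∀ i j, Atilde i j = A j i) ∧
    (¬ dd ∣ m / Nat.gcd m 2 → ∀ i j, Atilde i j = A i j) :=
  stmt2_general r A d hd hsym dd hdd hdval m hm M hM Atilde hAtilde
end

section
/- The lattice of special points L := { λ ∈ span(Φ) : (λ, α_i^∨) ∈ M_i·ℤ for all i = 1,…,r } is invariant under the Weyl group W, i.e. w(λ) ∈ L for every w ∈ W and λ ∈ L. -/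
/-!
The reflections in the simple roots preserve the lattice: for `λ` in it,
`(s_i λ, α_j^∨) = (λ, α_j^∨) - (λ, α_i^∨) (α_i, α_j^∨)`, and `M_j ∣ M_i (α_i, α_j^∨)` because
`M_α = lcm(m, 2d_α) / 2d_α` and `(α_i, α_j^∨) d_j = (α_j, α_i^∨) d_i`.
It remains to see that every `s_β` lies in the group generated by the simple reflections.
For a positive root `β` pick a simple root with `(β, α_i) > 0`; then `s_i β = β - k α_i` with
`k > 0` is a root whose coefficients off `α_i` are those of `β`, so either it is a positive root
of smaller height, and `s_β = s_i s_{s_i β} s_i`, or `β` is a multiple of `α_i`.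
-/

open scoped RealInnerProductSpace

theorem Int.natCast_div_gcd_dvd_iff {m n : ℕ} (hn : n ≠ 0) (x : ℤ) :
    ((m / m.gcd n : ℕ) : ℤ) ∣ x ↔ (m : ℤ) ∣ x * n := by
  obtain ⟨m', n', hcop, hm, hn'⟩ := Nat.exists_coprime m n
  have hg : 0 < m.gcd n := Nat.gcd_pos_of_pos_right m (Nat.pos_of_ne_zero hn)
  generalize m.gcd n = g at *
  subst hm hn'
  rw [Nat.mul_div_cancel _ hg]
  push_cast
  rw [show x * (n' * g) = (x * n') * g by ring, mul_dvd_mul_iff_right (by exact_mod_cast hg.ne')]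
  exact ⟨fun h => h.mul_right _, (Nat.isCoprime_iff_coprime.2 hcop).dvd_of_dvd_mul_right⟩

theorem div_gcd_dvd_div_gcd_mul {m ni nj : ℕ} (hni : ni ≠ 0) (hnj : nj ≠ 0) {kij kji : ℤ}
    (h : kij * nj = kji * ni) :
    ((m / m.gcd nj : ℕ) : ℤ) ∣ (m / m.gcd ni : ℕ) * kij := by
  rw [Int.natCast_div_gcd_dvd_iff hnj, mul_assoc, h, mul_left_comm]
  exact ((Int.natCast_div_gcd_dvd_iff hni _).1 dvd_rfl).mul_left _

section Reflection

variable {E : Type*} [NormedAddCommGroup E] [InnerProductSpace ℝ E]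

noncomputable def rootReflection (α : E) : E ≃ₗᵢ[ℝ] E := (ℝ ∙ α)ᗮ.reflection

theorem rootReflection_apply (α x : E) :
    rootReflection α x = x - (2 * ⟪x, α⟫ / ⟪α, α⟫) • α := by
  rw [rootReflection, Submodule.reflection_orthogonal_apply, Submodule.reflection_singleton_apply,
    real_inner_self_eq_norm_sq, real_inner_comm, two_smul, two_mul, add_div, add_smul]
  simp

theorem rootReflection_rootReflection (α x : E) : rootReflection α (rootReflection α x) = x :=
  Submodule.reflection_reflection _ x

theorem rootReflection_inv (α : E) : (rootReflection α)⁻¹ = rootReflection α :=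
  Submodule.reflection_inv

theorem rootReflection_self (α : E) : rootReflection α α = -α :=
  Submodule.reflection_orthogonalComplement_singleton_eq_neg α

theorem rootReflection_smul {c : ℝ} (hc : c ≠ 0) (α : E) :
    rootReflection (c • α) = rootReflection α := by
  ext x
  rcases eq_or_ne α 0 with rfl | hα
  · simp
  have := real_inner_self_pos.2 hα
  simp only [rootReflection_apply, real_inner_smul_left, real_inner_smul_right, smul_smul]
  congr 2
  field_simp

theorem rootReflection_neg (α : E) : rootReflection (-α) = rootReflection α := by
  simpa using rootReflection_smul (neg_ne_zero.2 one_ne_zero) α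

theorem rootReflection_map (g : E ≃ₗᵢ[ℝ] E) (α : E) :
    rootReflection (g α) = g * rootReflection α * g⁻¹ := by
  ext x
  have hx : ⟪g⁻¹ x, α⟫ = ⟪x, g α⟫ := by
    rw [← g.inner_map_map, LinearIsometryEquiv.coe_inv, g.apply_symm_apply]
  simp only [LinearIsometryEquiv.coe_mul, Function.comp_apply, rootReflection_apply, map_sub,
    map_smul, hx, g.inner_map_map]
  rw [LinearIsometryEquiv.coe_inv, g.apply_symm_apply]

theorem Set.MapsTo.of_mem_closure_range_rootReflection {ι : Type*} {a : ι → E} {L : Set E}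
    (h : ∀ i, Set.MapsTo (rootReflection (a i)) L L) {g : E ≃ₗᵢ[ℝ] E}
    (hg : g ∈ Subgroup.closure (Set.range fun i => rootReflection (a i))) :
    Set.MapsTo g L L := by
  induction hg using Subgroup.closure_induction'' with
  | mem _ hs => obtain ⟨i, rfl⟩ := hs; exact h i
  | inv_mem _ hs => obtain ⟨i, rfl⟩ := hs; rw [rootReflection_inv]; exact h i
  | one => exact Set.mapsTo_id L
  | mul _ _ _ _ hg hh => exact hg.comp hh

end Reflection

section RootSystem

variable {E : Type*} [NormedAddCommGroup E] [InnerProductSpace ℝ E]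

theorem exists_inner_pos_of_eq_sum_nonneg {ι : Type*} [Fintype ι] {a : ι → E} {c : ι → ℝ}
    (hc : ∀ i, 0 ≤ c i) {β : E} (hβ : β ≠ 0) (hβc : β = ∑ i, c i • a i) :
    ∃ i, 0 < ⟪β, a i⟫ := by
  have hsum : ∑ _i : ι, (0 : ℝ) < ∑ i, c i * ⟪β, a i⟫ := by
    simpa [← real_inner_smul_right, ← inner_sum, ← hβc] using real_inner_self_pos.2 hβ
  obtain ⟨i, -, hi⟩ := Finset.exists_lt_of_sum_lt hsum
  exact ⟨i, pos_of_mul_pos_right hi (hc i)⟩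

variable {r : ℕ} {a : Fin r → E} {Φ : Set E}

theorem nonneg_or_eq_zero_of_nonneg_of_ne (hind : LinearIndependent ℝ a)
    (hbase : ∀ β ∈ Φ, ∃ c : Fin r → ℤ, β = ∑ i, (c i : ℝ) • a i ∧
      ((∀ i, 0 ≤ c i) ∨ (∀ i, c i ≤ 0)))
    {β : E} (hβ : β ∈ Φ) {c : Fin r → ℤ} (hβc : β = ∑ j, (c j : ℝ) • a j) {i : Fin r}
    (hc : ∀ j ≠ i, 0 ≤ c j) : (∀ j, 0 ≤ c j) ∨ ∀ j ≠ i, c j = 0 := by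
  obtain ⟨c', hβc', hsign⟩ := hbase β hβ
  have hcc' : c' = c := funext fun j => by
    exact_mod_cast Fintype.linearIndependent_iffₛ.1 hind _ _ (hβc'.symm.trans hβc) j
  subst hcc'
  exact hsign.imp_right fun h j hj => le_antisymm (h j) (hc j hj)

theorem rootReflection_mem_closure_of_nonneg (hΦ0 : (0 : E) ∉ Φ)
    (hcrys : ∀ α ∈ Φ, ∀ β ∈ Φ, ∃ k : ℤ, 2 * ⟪β, α⟫ / ⟪α, α⟫ = k)
    (hrefl : ∀ α ∈ Φ, ∀ β ∈ Φ, rootReflection α β ∈ Φ) (haΦ : ∀ i, a i ∈ Φ)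
    (hind : LinearIndependent ℝ a)
    (hbase : ∀ β ∈ Φ, ∃ c : Fin r → ℤ, β = ∑ i, (c i : ℝ) • a i ∧
      ((∀ i, 0 ≤ c i) ∨ (∀ i, c i ≤ 0)))
    {β : E} (hβ : β ∈ Φ) (c : Fin r → ℤ) (hc : ∀ j, 0 ≤ c j)
    (hβc : β = ∑ j, (c j : ℝ) • a j) :
    rootReflection β ∈ Subgroup.closure (Set.range fun i => rootReflection (a i)) := by
  have hβ0 : β ≠ 0 := ne_of_mem_of_not_mem hβ hΦ0
  obtain ⟨i, hi⟩ := exists_inner_pos_of_eq_sum_nonneg (c := fun j => (c j : ℝ))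
    (fun j => by exact_mod_cast hc j) hβ0 hβc
  obtain ⟨k, hk⟩ := hcrys _ (haΦ i) β hβ
  have hai : 0 < ⟪a i, a i⟫ := real_inner_self_pos.2 (hind.ne_zero i)
  have hk0 : 0 < k := by exact_mod_cast hk ▸ (by positivity : 0 < 2 * ⟪β, a i⟫ / ⟪a i, a i⟫)
  set c' := c - Pi.single i k
  have hβ' : rootReflection (a i) β = ∑ j, (c' j : ℝ) • a j := by
    rw [rootReflection_apply, hk, hβc]
    simp [c', sub_smul, Finset.sum_sub_distrib, Pi.single_apply]
  have hβ'Φ := hrefl _ (haΦ i) β hβ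
  have hsi : rootReflection (a i) ∈ Subgroup.closure (Set.range fun i => rootReflection (a i)) :=
    Subgroup.subset_closure ⟨i, rfl⟩
  rcases nonneg_or_eq_zero_of_nonneg_of_ne hind hbase hβ'Φ hβ' (i := i)
    (fun j hj => by simp [c', hj, hc j]) with hc' | hc'
  · have ih := rootReflection_mem_closure_of_nonneg hΦ0 hcrys hrefl haΦ hind hbase hβ'Φ c' hc' hβ'
    rw [← rootReflection_rootReflection (a i) β, rootReflection_map]
    exact mul_mem (mul_mem hsi ih) (inv_mem hsi)
  · have hcj : ∀ j ≠ i, c j = 0 := fun j hj => by simpa [c', hj] using hc' j hj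
    have hβi : β = (c i : ℝ) • a i := by
      rw [hβc, Finset.sum_eq_single i (fun j _ hj => by simp [hcj j hj]) (by simp)]
    have hci : (c i : ℝ) ≠ 0 := fun h => hβ0 (by rw [hβi, h, zero_smul])
    rwa [hβi, rootReflection_smul hci]
termination_by (∑ j, c j).toNat
decreasing_by
  have hc's : 0 ≤ ∑ j, c' j := Finset.sum_nonneg fun j _ => hc' j
  simp only [c', Pi.sub_apply, Finset.sum_sub_distrib, Finset.sum_pi_single', Finset.mem_univ,
    if_true] at hc's ⊢
  omega

theorem rootReflection_mem_closure (hΦ0 : (0 : E) ∉ Φ)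
    (hcrys : ∀ α ∈ Φ, ∀ β ∈ Φ, ∃ k : ℤ, 2 * ⟪β, α⟫ / ⟪α, α⟫ = k)
    (hrefl : ∀ α ∈ Φ, ∀ β ∈ Φ, rootReflection α β ∈ Φ) (haΦ : ∀ i, a i ∈ Φ)
    (hind : LinearIndependent ℝ a)
    (hbase : ∀ β ∈ Φ, ∃ c : Fin r → ℤ, β = ∑ i, (c i : ℝ) • a i ∧
      ((∀ i, 0 ≤ c i) ∨ (∀ i, c i ≤ 0)))
    {β : E} (hβ : β ∈ Φ) :
    rootReflection β ∈ Subgroup.closure (Set.range fun i => rootReflection (a i)) := by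
  obtain ⟨c, hβc, hc | hc⟩ := hbase β hβ
  · exact rootReflection_mem_closure_of_nonneg hΦ0 hcrys hrefl haΦ hind hbase hβ c hc hβc
  · have hnegβ : -β ∈ Φ := rootReflection_self β ▸ hrefl β hβ β hβ
    rw [← rootReflection_neg]
    exact rootReflection_mem_closure_of_nonneg hΦ0 hcrys hrefl haΦ hind hbase hnegβ (-c)
      (fun j => neg_nonneg.2 (hc j)) (by simp [hβc, Finset.sum_neg_distrib])

end RootSystem

section SpecialPoints

variable {E : Type*} [NormedAddCommGroup E] [InnerProductSpace ℝ E]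

theorem exists_int_inner_coroot_dvd {Φ : Set E} {coroot : E → E}
    (hco : ∀ α ∈ Φ, coroot α = (2 / ⟪α, α⟫) • α)
    (hcrys : ∀ α ∈ Φ, ∀ β ∈ Φ, ∃ k : ℤ, ⟪β, coroot α⟫ = k)
    {d : E → ℕ} (hd : ∀ α ∈ Φ, 0 < d α ∧ ⟪α, α⟫ = 2 * (d α : ℝ)) (m : ℕ)
    {α β : E} (hα : α ∈ Φ) (hβ : β ∈ Φ) :
    ∃ k : ℤ, ⟪α, coroot β⟫ = k ∧
      ((m / m.gcd (2 * d β) : ℕ) : ℤ) ∣ (m / m.gcd (2 * d α) : ℕ) * k := by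
  have hpair : ∀ {γ δ : E}, δ ∈ Φ → ⟪γ, coroot δ⟫ * (2 * d δ) = 2 * ⟪γ, δ⟫ := by
    intro γ δ hδ
    have : ⟪δ, δ⟫ ≠ 0 := by rw [(hd δ hδ).2]; exact_mod_cast (Nat.mul_pos two_pos (hd δ hδ).1).ne'
    rw [hco δ hδ, real_inner_smul_right, ← (hd δ hδ).2]
    field_simp
  obtain ⟨k, hk⟩ := hcrys β hβ α hα
  obtain ⟨k', hk'⟩ := hcrys α hα β hβ
  have hkk' : k * (2 * d β : ℕ) = k' * (2 * d α : ℕ) := by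
    have := (hpair hβ).trans ((real_inner_comm α β).symm ▸ (hpair hα).symm)
    rw [hk, hk'] at this
    exact_mod_cast this
  exact ⟨k, hk, div_gcd_dvd_div_gcd_mul (by have := (hd α hα).1; omega)
    (by have := (hd β hβ).1; omega) hkk'⟩

theorem exists_int_inner_sub_inner_smul {ι : Type*} {a v : ι → E} {N : ι → ℕ} {i : ι}
    (hpair : ∀ j, ∃ k : ℤ, ⟪a i, v j⟫ = k ∧ (N j : ℤ) ∣ N i * k)
    {x : E} (hx : ∀ j, ∃ z : ℤ, ⟪x, v j⟫ = N j * z) (j : ι) :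
    ∃ z : ℤ, ⟪x - ⟪x, v i⟫ • a i, v j⟫ = N j * z := by
  obtain ⟨zi, hzi⟩ := hx i
  obtain ⟨zj, hzj⟩ := hx j
  obtain ⟨k, hk, t, ht⟩ := hpair j
  have htR : (N i : ℝ) * k = N j * t := by exact_mod_cast ht
  refine ⟨zj - zi * t, ?_⟩
  rw [inner_sub_left, real_inner_smul_left, hzj, hzi, hk]
  push_cast
  linear_combination (-(zi : ℝ)) * htR

end SpecialPoints

theorem stmt3_general {E : Type*} [NormedAddCommGroup E] [InnerProductSpace ℝ E]
    (Φ : Finset E) (hΦ0 : (0 : E) ∉ Φ)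
    (coroot : E → E)
    (hco : ∀ α ∈ Φ, coroot α = (2 / ⟪α, α⟫) • α)
    (hcrys : ∀ α ∈ Φ, ∀ β ∈ Φ, ∃ k : ℤ, ⟪β, coroot α⟫ = (k : ℝ))
    (hrefl : ∀ α ∈ Φ, ∀ β ∈ Φ, β - ⟪β, coroot α⟫ • α ∈ Φ)
    (r : ℕ) (a : Fin r → E) (haΦ : ∀ i, a i ∈ Φ)
    (hind : LinearIndependent ℝ a)
    (hbase : ∀ β ∈ Φ, ∃ c : Fin r → ℤ, β = ∑ i, (c i : ℝ) • a i ∧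
      ((∀ i, 0 ≤ c i) ∨ (∀ i, c i ≤ 0)))
    (d : E → ℕ) (hd : ∀ α ∈ Φ, 0 < d α ∧ ⟪α, α⟫ = 2 * (d α : ℝ))
    (m : ℕ)
    (M : E → ℕ) (hMdef : ∀ α, M α = m / Nat.gcd m (2 * d α))
    (W : Subgroup (E ≃ₗᵢ[ℝ] E))
    (hW : W = Subgroup.closure
      { w : E ≃ₗᵢ[ℝ] E | ∃ α ∈ Φ, ∀ x, w x = x - ⟪x, coroot α⟫ • α })
    (w : E ≃ₗᵢ[ℝ] E) (hw : w ∈ W)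
    (lam : E) (hlam : lam ∈ Submodule.span ℝ (Φ : Set E))
    (hspecial : ∀ i, ∃ z : ℤ, ⟪lam, coroot (a i)⟫ = (M (a i) : ℝ) * (z : ℝ)) :
    w lam ∈ Submodule.span ℝ (Φ : Set E) ∧
    ∀ i, ∃ z : ℤ, ⟪w lam, coroot (a i)⟫ = (M (a i) : ℝ) * (z : ℝ) := by
  have hreflection : ∀ α ∈ Φ, ∀ x, x - ⟪x, coroot α⟫ • α = rootReflection α x := by
    intro α hα x
    rw [hco α hα, rootReflection_apply, real_inner_smul_right, div_mul_eq_mul_div]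
  have hcartan : ∀ α ∈ Φ, ∀ β ∈ Φ, ∃ k : ℤ, 2 * ⟪β, α⟫ / ⟪α, α⟫ = k := by
    intro α hα β hβ
    simpa [hco α hα, real_inner_smul_right, div_mul_eq_mul_div] using hcrys α hα β hβ
  have hwG : w ∈ Subgroup.closure (Set.range fun i => rootReflection (a i)) := by
    subst hW
    refine (Subgroup.closure_le _).2 ?_ hw
    rintro g ⟨α, hα, hg⟩
    obtain rfl : g = rootReflection α :=
      LinearIsometryEquiv.ext fun x => (hg x).trans (hreflection α hα x)
    exact rootReflection_mem_closure hΦ0 hcartan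
      (fun α hα β hβ => hreflection α hα β ▸ hrefl α hα β hβ) haΦ hind hbase hα
  let L : Set E := {x | x ∈ Submodule.span ℝ (Φ : Set E) ∧
    ∀ j, ∃ z : ℤ, ⟪x, coroot (a j)⟫ = (M (a j) : ℝ) * (z : ℝ)}
  have hsimple : ∀ i, Set.MapsTo (rootReflection (a i)) L L := by
    rintro i x ⟨hxΦ, hx⟩
    rw [← hreflection _ (haΦ i)]
    refine ⟨sub_mem hxΦ (Submodule.smul_mem _ _ (Submodule.subset_span (haΦ i))),
      exists_int_inner_sub_inner_smul (v := fun j => coroot (a j)) (N := fun j => M (a j))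
        (fun j => ?_) hx⟩
    simpa only [hMdef] using exists_int_inner_coroot_dvd hco hcrys hd m (haΦ i) (haΦ j)
  exact Set.MapsTo.of_mem_closure_range_rootReflection hsimple hwG
    (show lam ∈ L from ⟨hlam, hspecial⟩)

/-- The lattice of special points
`L = {λ ∈ span Φ : ⟪λ, αᵢ^∨⟫ ∈ Mᵢ ℤ for all simple roots αᵢ}` is invariant
under the Weyl group `W` (the subgroup of isometries generated by the
reflections in the roots of a finite crystallographic root system `Φ`). -/
theorem stmt3 {E : Type*} [NormedAddCommGroup E] [InnerProductSpace ℝ E]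
    [FiniteDimensional ℝ E]
    (Φ : Finset E) (hΦ0 : (0 : E) ∉ Φ)
    (coroot : E → E)
    (hco : ∀ α ∈ Φ, coroot α = (2 / ⟪α, α⟫) • α)
    (hcrys : ∀ α ∈ Φ, ∀ β ∈ Φ, ∃ k : ℤ, ⟪β, coroot α⟫ = (k : ℝ))
    (hrefl : ∀ α ∈ Φ, ∀ β ∈ Φ, β - ⟪β, coroot α⟫ • α ∈ Φ)
    (r : ℕ) (a : Fin r → E) (haΦ : ∀ i, a i ∈ Φ)
    (hind : LinearIndependent ℝ a)
    (hspan : Submodule.span ℝ (Set.range a) = Submodule.span ℝ (Φ : Set E))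
    (hbase : ∀ β ∈ Φ, ∃ c : Fin r → ℤ, β = ∑ i, (c i : ℝ) • a i ∧
      ((∀ i, 0 ≤ c i) ∨ (∀ i, c i ≤ 0)))
    (d : E → ℕ) (hd : ∀ α ∈ Φ, 0 < d α ∧ ⟪α, α⟫ = 2 * (d α : ℝ))
    (m : ℕ) (hm : 0 < m)
    (M : E → ℕ) (hMdef : ∀ α, M α = m / Nat.gcd m (2 * d α))
    (W : Subgroup (E ≃ₗᵢ[ℝ] E))
    (hW : W = Subgroup.closure
      { w : E ≃ₗᵢ[ℝ] E | ∃ α ∈ Φ, ∀ x, w x = x - ⟪x, coroot α⟫ • α })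
    (w : E ≃ₗᵢ[ℝ] E) (hw : w ∈ W)
    (lam : E) (hlam : lam ∈ Submodule.span ℝ (Φ : Set E))
    (hspecial : ∀ i, ∃ z : ℤ, ⟪lam, coroot (a i)⟫ = (M (a i) : ℝ) * (z : ℝ)) :
    w lam ∈ Submodule.span ℝ (Φ : Set E) ∧
    ∀ i, ∃ z : ℤ, ⟪w lam, coroot (a i)⟫ = (M (a i) : ℝ) * (z : ℝ) :=
  stmt3_general Φ hΦ0 coroot hco hcrys hrefl r a haΦ hind hbase d hd m M hMdef W hW w hw lam hlam
    hspecial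
end

section
/- Let M ≥ 1 and let q ∈ ℂ^× be such that q² is a primitive M-th root of unity. Then for every a ∈ ℤ, c ∈ ℕ, and natural numbers b, d with 0 ≤ b ≤ M−1 and 0 ≤ d ≤ M−1, the following identity holds in ℂ: [aM+b choose cM+d]_q = q^{M²·c·(a+1) + M·(a·d − b·c)} · [b choose d]_q · C(a, c). -/
/-- The balanced Gaussian binomial coefficient `[n choose k]_v`, defined as the Laurent
polynomial (= rational function with only a power of `v` in the denominator)
`∏_{s=1}^{k} (v^{n−s+1} − v^{−(n−s+1)})/(v^s − v^{−s})`, evaluated at `v = q ∈ ℂ`. -/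
noncomputable def qbinom (q : ℂ) (n : ℤ) (k : ℕ) : ℂ :=
  RatFunc.eval (algebraMap ℚ ℂ) q
    (∏ s ∈ Finset.range k,
      ((RatFunc.X : RatFunc ℚ) ^ (n - (s : ℤ)) - (RatFunc.X : RatFunc ℚ) ^ (-(n - (s : ℤ)))) /
      ((RatFunc.X : RatFunc ℚ) ^ ((s : ℤ) + 1) - (RatFunc.X : RatFunc ℚ) ^ (-((s : ℤ) + 1))))

/-- The generalized ordinary binomial coefficient `C(a, c) = a(a−1)⋯(a−c+1)/c!` for
`a ∈ ℤ`, `c ∈ ℕ`, as a complex number. -/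
noncomputable def genBinom (a : ℤ) (c : ℕ) : ℂ :=
  (∏ i ∈ Finset.range c, ((a : ℂ) - (i : ℂ))) / (Nat.factorial c : ℂ)

/-!
Regard both sides as functions of `(a, c) ∈ ℤ × ℤ`, extended by `0` to `c < 0`. Both satisfy the
recurrence `F (a + 1) c = α a c * F a c + β a c * F a (c - 1)` with `α a c ≠ 0`, and they agree at
`a = 0`; since the recurrence can be run upwards and (by induction on `c`) downwards in `a`, they
agree everywhere.

For the left-hand side the recurrence is
`[n + M choose k]_q = q^{Mk} [n choose k]_q + q^{M(k-M-n)} [n choose k - M]_q`,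
proved by the same uniqueness argument in `n`: its base case is that `[M choose k]_q` vanishes for
`0 < k < M`, and the recurrence is Pascal's rule. Pascal's rule holds in `ℚ(v)` and survives
evaluation at `v = q` because `[n choose k]_v` is regular at every `q ≠ 0`. For the right-hand side
the recurrence is Pascal's rule for `C(a, c)`; the powers of `q` match because `q^{2M} = 1`.
-/

open Finset

universe u

namespace RatFunc

variable {K : Type u} [Field K]

theorem X_pow_ne_one {k : ℕ} (hk : k ≠ 0) : (X : RatFunc K) ^ k ≠ 1 := by
  intro h
  have : (Polynomial.X : Polynomial K) ^ k = 1 :=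
    algebraMap_injective K (by rw [map_pow, algebraMap_X, map_one, h])
  simpa [hk] using congrArg Polynomial.natDegree this

theorem X_zpow_ne_one {m : ℤ} (hm : m ≠ 0) : (X : RatFunc K) ^ m ≠ 1 := by
  obtain ⟨k, hk, rfl | rfl⟩ : ∃ k : ℕ, k ≠ 0 ∧ (m = k ∨ m = -k) :=
    ⟨m.natAbs, by omega, m.natAbs_eq⟩
  · exact_mod_cast X_pow_ne_one hk
  · rw [zpow_neg, inv_ne_one]
    exact_mod_cast X_pow_ne_one hk

theorem X_zpow_eq_div (t : ℤ) : (X : RatFunc K) ^ t =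
    algebraMap (Polynomial K) (RatFunc K) (Polynomial.X ^ t.toNat) /
      algebraMap (Polynomial K) (RatFunc K) (Polynomial.X ^ (-t).toNat) := by
  rw [map_pow, map_pow, algebraMap_X, ← zpow_natCast, ← zpow_natCast, ← zpow_sub₀ X_ne_zero]
  congr 1
  omega

section Regular

variable {L : Type u} [Field L] (f : K →+* L) (a : L)

/-- `RatFunc.eval` reduces a fraction before evaluating it, so it respects `+` and `*` only where
the denominators do not vanish. -/
def RegularAt (r : RatFunc K) : Prop := r.denom.eval₂ f a ≠ 0

variable {f a}

theorem RegularAt.add {x y : RatFunc K} (hx : RegularAt f a x) (hy : RegularAt f a y) :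
    RegularAt f a (x + y) := fun h => mul_ne_zero hx hy <| by
  simpa only [Polynomial.eval₂_mul] using
    Polynomial.eval₂_eq_zero_of_dvd_of_eval₂_eq_zero f a (denom_add_dvd x y) h

theorem RegularAt.mul {x y : RatFunc K} (hx : RegularAt f a x) (hy : RegularAt f a y) :
    RegularAt f a (x * y) := fun h => mul_ne_zero hx hy <| by
  simpa only [Polynomial.eval₂_mul] using
    Polynomial.eval₂_eq_zero_of_dvd_of_eval₂_eq_zero f a (denom_mul_dvd x y) h

theorem regularAt_C (c : K) : RegularAt f a (C c) := by simp [RegularAt]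

theorem RegularAt.neg {x : RatFunc K} (hx : RegularAt f a x) : RegularAt f a (-x) := by
  simpa using (regularAt_C (f := f) (a := a) (-1)).mul hx

theorem RegularAt.sub {x y : RatFunc K} (hx : RegularAt f a x) (hy : RegularAt f a y) :
    RegularAt f a (x - y) := by
  simpa only [sub_eq_add_neg] using hx.add hy.neg

theorem regularAt_X_zpow (ha : a ≠ 0) (t : ℤ) : RegularAt f a (X ^ t) := by
  intro h
  rw [X_zpow_eq_div] at h
  have := Polynomial.eval₂_eq_zero_of_dvd_of_eval₂_eq_zero f a (denom_div_dvd _ _) h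
  simp [ha] at this

theorem eval_neg {x : RatFunc K} (hx : RegularAt f a x) : eval f a (-x) = -eval f a x := by
  rw [neg_eq_neg_one_mul, ← map_one C, ← map_neg C, eval_mul f a (regularAt_C _) hx, eval_C]
  simp

theorem eval_sub {x y : RatFunc K} (hx : RegularAt f a x) (hy : RegularAt f a y) :
    eval f a (x - y) = eval f a x - eval f a y := by
  rw [sub_eq_add_neg, eval_add f a hx hy.neg, eval_neg hy, sub_eq_add_neg]

theorem eval_X_pow (n : ℕ) : eval f a (X ^ n) = a ^ n := by
  rw [← algebraMap_X, ← map_pow, eval_algebraMap]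
  simp

theorem eval_X_zpow (ha : a ≠ 0) (t : ℤ) : eval f a (X ^ t) = a ^ t := by
  have h := eval_mul f a (regularAt_X_zpow ha t) (regularAt_X_zpow ha (-t).toNat)
  rw [← zpow_add₀ X_ne_zero, show t + (-t).toNat = t.toNat by omega, zpow_natCast, zpow_natCast,
    eval_X_pow, eval_X_pow, ← zpow_natCast, ← zpow_natCast, eq_comm,
    ← eq_div_iff (zpow_ne_zero _ ha), ← zpow_sub₀ ha] at h
  rw [h]
  congr 1
  omega

end Regular

end RatFunc

section Recurrence

variable {R : Type*} [CommRing R] [NoZeroDivisors R] {f g α β : ℤ → ℤ → R}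

theorem eq_zero_of_recurrence (hα : ∀ a c, α a c ≠ 0)
    (hf : ∀ a c, f (a + 1) c = α a c * f a c + β a c * f a (c - 1))
    (hf_neg : ∀ a c, c < 0 → f a c = 0) (hf_zero : ∀ c, f 0 c = 0) (a c : ℤ) : f a c = 0 := by
  revert c
  induction a using Int.induction_on with
  | zero => exact hf_zero
  | succ i ih => intro c; rw [hf, ih, ih, mul_zero, mul_zero, add_zero]
  | pred i ih =>
    have step (c : ℤ) (h : f (-i - 1) (c - 1) = 0) : f (-i - 1) c = 0 := by
      have := hf (-i - 1) c
      rw [sub_add_cancel, ih, h, mul_zero, add_zero, eq_comm, mul_eq_zero] at this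
      exact this.resolve_left (hα _ _)
    intro c
    induction c using Int.induction_on with
    | zero => exact step 0 (hf_neg _ _ (by norm_num))
    | succ j hj => exact step _ (by rwa [add_sub_cancel_right])
    | pred j _ => exact hf_neg _ _ (by omega)

theorem eq_of_recurrence (hα : ∀ a c, α a c ≠ 0)
    (hf : ∀ a c, f (a + 1) c = α a c * f a c + β a c * f a (c - 1))
    (hg : ∀ a c, g (a + 1) c = α a c * g a c + β a c * g a (c - 1))
    (hf_neg : ∀ a c, c < 0 → f a c = 0) (hg_neg : ∀ a c, c < 0 → g a c = 0)
    (h_zero : ∀ c, f 0 c = g 0 c) (a c : ℤ) : f a c = g a c :=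
  sub_eq_zero.1 <| eq_zero_of_recurrence (f := fun a c => f a c - g a c) (α := α) (β := β) hα
    (fun a c => by simp only [hf, hg]; ring) (fun a c hc => by simp [hf_neg a c hc, hg_neg a c hc])
    (fun c => sub_eq_zero.2 (h_zero c)) a c

end Recurrence

namespace Function

variable {R : Type*} [Zero R] (u : ℕ → R)

@[simp]
theorem extend_natCast_apply (k : ℕ) : extend ((↑) : ℕ → ℤ) u 0 k = u k :=
  Nat.cast_injective.extend_apply u 0 k

@[simp]
theorem extend_natCast_apply_zero : extend ((↑) : ℕ → ℤ) u 0 0 = u 0 :=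
  extend_natCast_apply u 0

@[simp]
theorem extend_natCast_apply_natCast_add_one (k : ℕ) :
    extend ((↑) : ℕ → ℤ) u 0 (k + 1) = u (k + 1) := by
  exact_mod_cast extend_natCast_apply u (k + 1)

theorem extend_natCast_apply_of_neg {j : ℤ} (hj : j < 0) : extend ((↑) : ℕ → ℤ) u 0 j = 0 :=
  extend_apply' _ _ _ (by rintro ⟨k, rfl⟩; omega)

end Function

namespace GaussBinom

open RatFunc

noncomputable def qDiff (m : ℤ) : RatFunc ℚ := X ^ m - X ^ (-m)

noncomputable def gaussBinom (n : ℤ) (k : ℕ) : RatFunc ℚ :=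
  ∏ s ∈ range k, qDiff (n - s) / qDiff (s + 1)

theorem qbinom_eq_eval (q : ℂ) (n : ℤ) (k : ℕ) :
    qbinom q n k = eval (algebraMap ℚ ℂ) q (gaussBinom n k) := rfl

theorem qDiff_ne_zero {m : ℤ} (hm : m ≠ 0) : qDiff m ≠ 0 := by
  rw [qDiff, sub_ne_zero]
  intro h
  apply X_zpow_ne_one (K := ℚ) (m := 2 * m) (by omega)
  rw [two_mul, zpow_add₀ X_ne_zero]
  nth_rw 1 [h]
  rw [← zpow_add₀ X_ne_zero, neg_add_cancel, zpow_zero]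

theorem qDiff_add (n : ℤ) (k : ℕ) :
    qDiff (n + 1) = X ^ ((k : ℤ) + 1) * qDiff (n - k) + X ^ ((k : ℤ) - n) * qDiff (k + 1) := by
  simp only [qDiff, mul_sub, ← zpow_add₀ (X_ne_zero : (X : RatFunc ℚ) ≠ 0)]
  ring_nf

theorem gaussBinom_eq_div (n : ℤ) (k : ℕ) :
    gaussBinom n k = (∏ s ∈ range k, qDiff (n - s)) / ∏ s ∈ range k, qDiff (s + 1) :=
  prod_div_distrib _ _

theorem prod_qDiff_ne_zero (k : ℕ) : ∏ s ∈ range k, qDiff (s + 1) ≠ 0 :=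
  prod_ne_zero_iff.2 fun _ _ => qDiff_ne_zero (by omega)

theorem gaussBinom_zero_right (n : ℤ) : gaussBinom n 0 = 1 := prod_range_zero _

theorem gaussBinom_succ_mul (n : ℤ) (k : ℕ) :
    gaussBinom n (k + 1) * qDiff (k + 1) = gaussBinom n k * qDiff (n - k) := by
  rw [gaussBinom, prod_range_succ, mul_assoc, div_mul_cancel₀ _ (qDiff_ne_zero (by omega))]
  rfl

theorem gaussBinom_succ_succ_mul (n : ℤ) (k : ℕ) :
    gaussBinom (n + 1) (k + 1) * qDiff (k + 1) = qDiff (n + 1) * gaussBinom n k := by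
  rw [gaussBinom_eq_div, gaussBinom_eq_div, prod_range_succ',
    prod_range_succ (fun s : ℕ => qDiff (s + 1))]
  have h_prod := prod_qDiff_ne_zero k
  have h_last : qDiff (k + 1) ≠ 0 := qDiff_ne_zero (by omega)
  field_simp
  push_cast
  ring_nf

theorem gaussBinom_pascal (n : ℤ) (k : ℕ) :
    gaussBinom (n + 1) (k + 1) =
      X ^ ((k : ℤ) + 1) * gaussBinom n (k + 1) + X ^ ((k : ℤ) - n) * gaussBinom n k := by
  apply mul_right_cancel₀ (qDiff_ne_zero (m := k + 1) (by omega))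
  rw [gaussBinom_succ_succ_mul, add_mul, mul_assoc, gaussBinom_succ_mul, qDiff_add n k]
  ring

theorem gaussBinom_eq_zero_of_lt {n k : ℕ} (h : n < k) : gaussBinom n k = 0 :=
  prod_eq_zero (mem_range.2 h) (by simp [qDiff])

theorem gaussBinom_self (n : ℕ) : gaussBinom n n = 1 := by
  rw [gaussBinom_eq_div, div_eq_one_iff_eq (prod_qDiff_ne_zero n), ← prod_range_reflect]
  refine prod_congr rfl fun s hs => ?_
  congr 1
  have := mem_range.1 hs
  omega

theorem gaussBinom_eq_X_zpow_mul_sub (n : ℤ) (k : ℕ) :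
    gaussBinom n (k + 1) =
      X ^ (-((k : ℤ) + 1)) * (gaussBinom (n + 1) (k + 1) - X ^ ((k : ℤ) - n) * gaussBinom n k) := by
  rw [gaussBinom_pascal, add_sub_cancel_right, ← mul_assoc, ← zpow_add₀ X_ne_zero, neg_add_cancel,
    zpow_zero, one_mul]

section Eval

variable {q : ℂ}

theorem regularAt_gaussBinom (hq : q ≠ 0) (n : ℤ) (k : ℕ) :
    RegularAt (algebraMap ℚ ℂ) q (gaussBinom n k) := by
  induction k generalizing n with
  | zero => simpa [gaussBinom_zero_right] using regularAt_C (f := algebraMap ℚ ℂ) (a := q) 1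
  | succ k ih =>
    induction n using Int.induction_on with
    | zero =>
      rw [show (0 : ℤ) = (0 : ℕ) from rfl, gaussBinom_eq_zero_of_lt k.succ_pos]
      simpa using regularAt_C (f := algebraMap ℚ ℂ) (a := q) 0
    | succ i hi =>
      rw [gaussBinom_pascal]
      exact ((regularAt_X_zpow hq _).mul hi).add ((regularAt_X_zpow hq _).mul (ih _))
    | pred i hi =>
      rw [gaussBinom_eq_X_zpow_mul_sub, sub_add_cancel]
      exact (regularAt_X_zpow hq _).mul (hi.sub ((regularAt_X_zpow hq _).mul (ih _)))

theorem qbinom_zero_right (n : ℤ) : qbinom q n 0 = 1 := by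
  rw [qbinom_eq_eval, gaussBinom_zero_right, eval_one]

theorem qbinom_eq_zero_of_lt {n k : ℕ} (h : n < k) : qbinom q n k = 0 := by
  rw [qbinom_eq_eval, gaussBinom_eq_zero_of_lt h, eval_zero]

theorem qbinom_self (n : ℕ) : qbinom q n n = 1 := by
  rw [qbinom_eq_eval, gaussBinom_self, eval_one]

theorem qbinom_pascal (hq : q ≠ 0) (n : ℤ) (k : ℕ) :
    qbinom q (n + 1) (k + 1) =
      q ^ ((k : ℤ) + 1) * qbinom q n (k + 1) + q ^ ((k : ℤ) - n) * qbinom q n k := by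
  have hX := regularAt_X_zpow (f := algebraMap ℚ ℂ) hq
  have hB := regularAt_gaussBinom hq
  simp only [qbinom_eq_eval]
  rw [gaussBinom_pascal, eval_add _ _ ((hX _).mul (hB _ _)) ((hX _).mul (hB _ _)),
    eval_mul _ _ (hX _) (hB _ _), eval_mul _ _ (hX _) (hB _ _), eval_X_zpow hq, eval_X_zpow hq]

theorem eval_qDiff (hq : q ≠ 0) (m : ℤ) :
    eval (algebraMap ℚ ℂ) q (qDiff m) = q ^ m - q ^ (-m) := by
  rw [qDiff, eval_sub (regularAt_X_zpow hq _) (regularAt_X_zpow hq _), eval_X_zpow hq,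
    eval_X_zpow hq]

theorem qbinom_succ_mul (hq : q ≠ 0) (n : ℤ) (k : ℕ) :
    qbinom q n (k + 1) * (q ^ ((k : ℤ) + 1) - q ^ (-((k : ℤ) + 1))) =
      qbinom q n k * (q ^ (n - k) - q ^ (-(n - k))) := by
  have hD (m : ℤ) : RegularAt (algebraMap ℚ ℂ) q (qDiff m) :=
    (regularAt_X_zpow hq _).sub (regularAt_X_zpow hq _)
  have hB := regularAt_gaussBinom hq
  simp only [qbinom_eq_eval, ← eval_qDiff hq, ← eval_mul _ _ (hB _ _) (hD _)]
  rw [gaussBinom_succ_mul]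

end Eval


/-- Extended by `0` to negative lower index, so that Pascal's rule holds for every `j : ℤ`. -/
noncomputable def qbinomZ (q : ℂ) (n : ℤ) : ℤ → ℂ := Function.extend (↑) (qbinom q n) 0

noncomputable def chooseZ (a : ℤ) : ℤ → ℂ :=
  Function.extend (↑) (fun k => ((Ring.choose a k : ℤ) : ℂ)) 0

theorem genBinom_eq_choose (a : ℤ) (c : ℕ) : genBinom a c = Ring.choose a c := by
  have h := congrArg (fun z : ℤ => (z : ℂ)) (Ring.descPochhammer_eq_factorial_smul_choose a c)
  simp only [← Polynomial.eval_eq_smeval, descPochhammer_eval_eq_prod_range, nsmul_eq_mul] at h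
  rw [genBinom, div_eq_iff (by exact_mod_cast c.factorial_ne_zero)]
  push_cast at h
  rw [h, mul_comm]

theorem chooseZ_of_neg (a : ℤ) {c : ℤ} (hc : c < 0) : chooseZ a c = 0 :=
  Function.extend_natCast_apply_of_neg _ hc

theorem chooseZ_zero_left {c : ℤ} (hc : 0 < c) : chooseZ 0 c = 0 := by
  lift c to ℕ using hc.le
  simp [chooseZ, Ring.choose_zero_pos ℤ (show 0 < c by omega)]

theorem chooseZ_succ (a c : ℤ) : chooseZ (a + 1) c = chooseZ a c + chooseZ a (c - 1) := by
  rcases lt_trichotomy c 0 with hc | rfl | hc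
  · simp [chooseZ_of_neg _ hc, chooseZ_of_neg _ (show c - 1 < 0 by omega)]
  · simp [chooseZ]
  · obtain ⟨k, rfl⟩ : ∃ k : ℕ, c = k + 1 := ⟨(c - 1).toNat, by omega⟩
    simp [chooseZ, Ring.choose_succ_succ, add_comm]

section IntIndex

variable {q : ℂ}

theorem qbinomZ_of_neg {j : ℤ} (hj : j < 0) (n : ℤ) : qbinomZ q n j = 0 :=
  Function.extend_natCast_apply_of_neg _ hj

theorem qbinomZ_zero_left (j : ℤ) : qbinomZ q 0 j = if j = 0 then 1 else 0 := by
  rcases lt_trichotomy j 0 with hj | rfl | hj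
  · rw [qbinomZ_of_neg hj, if_neg hj.ne]
  · simp [qbinomZ, qbinom_zero_right]
  · lift j to ℕ using hj.le
    rw [if_neg hj.ne', qbinomZ, Function.extend_natCast_apply]
    exact_mod_cast qbinom_eq_zero_of_lt (show 0 < j by omega)

theorem qbinomZ_eq_zero_of_lt {n : ℕ} {j : ℤ} (h : n < j) : qbinomZ q n j = 0 := by
  lift j to ℕ using (by omega)
  simp [qbinomZ, qbinom_eq_zero_of_lt (show n < j by omega)]

theorem qbinomZ_pascal (hq : q ≠ 0) (n j : ℤ) :
    qbinomZ q (n + 1) j = q ^ j * qbinomZ q n j + q ^ (j - 1 - n) * qbinomZ q n (j - 1) := by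
  rcases lt_trichotomy j 0 with hj | rfl | hj
  · simp [qbinomZ_of_neg hj, qbinomZ_of_neg (show j - 1 < 0 by omega)]
  · simp [qbinomZ, qbinom_zero_right]
  · obtain ⟨k, rfl⟩ : ∃ k : ℕ, j = k + 1 := ⟨(j - 1).toNat, by omega⟩
    simp only [qbinomZ, Function.extend_natCast_apply_natCast_add_one, add_sub_cancel_right,
      Function.extend_natCast_apply, qbinom_pascal hq]

end IntIndex

section RootOfUnity

variable {q : ℂ} {M : ℕ} (hM : 0 < M) (hprim : IsPrimitiveRoot (q ^ 2) M)
include hM hprim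

theorem ne_zero_of_isPrimitiveRoot_sq : q ≠ 0 := by
  rintro rfl
  exact hprim.ne_zero hM.ne' (zero_pow two_ne_zero)

theorem zpow_eq_zpow_of_dvd {s t : ℤ} (h : 2 * (M : ℤ) ∣ s - t) : q ^ s = q ^ t := by
  obtain ⟨d, hd⟩ := h
  rw [show s = t + 2 * M * d by omega, zpow_add₀ (ne_zero_of_isPrimitiveRoot_sq hM hprim),
    zpow_mul, show (2 * M : ℤ) = (2 * M : ℕ) by push_cast; rfl, zpow_natCast, pow_mul,
    hprim.pow_eq_one, one_zpow, mul_one]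

theorem zpow_mul_zpow_of_dvd {s t u : ℤ} (h : 2 * (M : ℤ) ∣ s + t - u) :
    q ^ s * q ^ t = q ^ u := by
  rw [← zpow_add₀ (ne_zero_of_isPrimitiveRoot_sq hM hprim)]
  exact zpow_eq_zpow_of_dvd hM hprim h

theorem zpow_mul_zpow_eq_of_dvd {s t u v : ℤ} (h : 2 * (M : ℤ) ∣ s + t - (u + v)) :
    q ^ s * q ^ t = q ^ u * q ^ v := by
  rw [zpow_mul_zpow_of_dvd hM hprim h, zpow_add₀ (ne_zero_of_isPrimitiveRoot_sq hM hprim)]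

theorem zpow_sub_zpow_neg_ne_zero {j : ℕ} (hj : 0 < j) (hjM : j < M) :
    q ^ (j : ℤ) - q ^ (-(j : ℤ)) ≠ 0 := by
  rw [sub_ne_zero]
  intro h
  apply hprim.pow_ne_one_of_pos_of_lt hj.ne' hjM
  rw [← pow_mul, mul_comm, pow_mul, sq, ← zpow_natCast]
  nth_rw 1 [h]
  rw [← zpow_add₀ (ne_zero_of_isPrimitiveRoot_sq hM hprim), neg_add_cancel, zpow_zero]

theorem qbinom_eq_zero_of_pos_of_lt {j : ℕ} (hj : 0 < j) (hjM : j < M) : qbinom q M j = 0 := by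
  induction j with
  | zero => omega
  | succ i ih =>
    have h := qbinom_succ_mul (ne_zero_of_isPrimitiveRoot_sq hM hprim) M i
    have h_rhs : qbinom q M i * (q ^ ((M : ℤ) - i) - q ^ (-((M : ℤ) - i))) = 0 := by
      rcases Nat.eq_zero_or_pos i with rfl | hi
      · rw [sub_eq_zero.2 (zpow_eq_zpow_of_dvd hM hprim ⟨1, by ring⟩), mul_zero]
      · rw [ih hi (by omega), zero_mul]
    rw [h_rhs, mul_eq_zero] at h
    refine h.resolve_right ?_
    exact_mod_cast zpow_sub_zpow_neg_ne_zero hM hprim i.succ_pos hjM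

theorem qbinomZ_order (k : ℤ) :
    qbinomZ q M k = (if k = 0 then 1 else 0) + (if k = M then 1 else 0) := by
  rcases lt_or_ge k 0 with hk | hk
  · rw [qbinomZ_of_neg hk, if_neg hk.ne, if_neg (by omega), add_zero]
  lift k to ℕ using hk
  simp only [qbinomZ, Function.extend_natCast_apply, Nat.cast_inj]
  rcases lt_trichotomy k M with h | rfl | h
  · rcases Nat.eq_zero_or_pos k with rfl | hk
    · simp [qbinom_zero_right, hM.ne]
    · simp [qbinom_eq_zero_of_pos_of_lt hM hprim hk h, hk.ne', h.ne]
  · simp [qbinom_self, hM.ne']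
  · simp [qbinom_eq_zero_of_lt h, h.ne', (hM.trans h).ne']

theorem qbinomZ_add_order (n k : ℤ) :
    qbinomZ q (n + M) k =
      q ^ (M * k) * qbinomZ q n k + q ^ (M * (k - M - n)) * qbinomZ q n (k - M) := by
  have hq := ne_zero_of_isPrimitiveRoot_sq hM hprim
  refine eq_of_recurrence (f := fun n k => qbinomZ q (n + M) k)
    (g := fun n k => q ^ (M * k) * qbinomZ q n k + q ^ (M * (k - M - n)) * qbinomZ q n (k - M))
    (α := fun _ k => q ^ k) (β := fun n k => q ^ (k - 1 - (n + M))) (fun _ _ => zpow_ne_zero _ hq)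
    (fun n k => by rw [add_right_comm]; exact qbinomZ_pascal hq _ _) (fun n k => ?_)
    (fun _ _ hk => qbinomZ_of_neg hk _) (fun n k hk => ?_) (fun k => ?_) n k
  · have e1 : q ^ (M * k) * q ^ (k - 1 - n) = q ^ (k - 1 - (n + M)) * q ^ (M * (k - 1)) :=
      zpow_mul_zpow_eq_of_dvd hM hprim ⟨1, by ring⟩
    have e2 : q ^ (M * (k - M - (n + 1))) * q ^ (k - M) = q ^ k * q ^ (M * (k - M - n)) :=
      zpow_mul_zpow_eq_of_dvd hM hprim ⟨-1, by ring⟩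
    have e3 : q ^ (M * (k - M - (n + 1))) * q ^ (k - M - 1 - n) =
        q ^ (k - 1 - (n + M)) * q ^ (M * (k - M - 1 - n)) :=
      zpow_mul_zpow_eq_of_dvd hM hprim ⟨0, by ring⟩
    rw [sub_right_comm k 1 (M : ℤ), qbinomZ_pascal hq n k, qbinomZ_pascal hq n (k - M)]
    linear_combination qbinomZ q n (k - 1) * e1 + qbinomZ q n (k - M) * e2 +
      qbinomZ q n (k - M - 1) * e3
  · rw [qbinomZ_of_neg hk, qbinomZ_of_neg (by omega), mul_zero, mul_zero, add_zero]
  · simp only [zero_add, qbinomZ_order hM hprim, qbinomZ_zero_left]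
    split_ifs <;> simp_all
    omega

theorem qbinomZ_lucas {b e : ℕ} (hb : b < M) (he : e < M) (a c : ℤ) :
    qbinomZ q (a * M + b) (c * M + e) =
      q ^ ((M : ℤ) ^ 2 * c * (a + 1) + M * (a * e - b * c)) * qbinom q b e *
        chooseZ a c := by
  have hq := ne_zero_of_isPrimitiveRoot_sq hM hprim
  refine eq_of_recurrence (f := fun a c => qbinomZ q (a * M + b) (c * M + e))
    (g := fun a c => q ^ ((M : ℤ) ^ 2 * c * (a + 1) + M * (a * e - b * c)) * qbinom q b e *
      chooseZ a c)
    (α := fun _ c => q ^ (M * (c * M + e)))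
    (β := fun a c => q ^ (M * (c * M + e - M - (a * M + b))))
    (fun _ _ => zpow_ne_zero _ hq) (fun a c => ?_) (fun a c => ?_) (fun a c hc => ?_)
    (fun a c hc => ?_) (fun c => ?_) a c
  · rw [show (a + 1) * M + b = a * M + b + M by ring, qbinomZ_add_order hM hprim,
      show c * M + e - M = (c - 1) * M + e by ring]
  · have e1 : q ^ (M * (c * M + e)) * q ^ ((M : ℤ) ^ 2 * c * (a + 1) + M * (a * e - b * c)) =
        q ^ ((M : ℤ) ^ 2 * c * (a + 1 + 1) + M * ((a + 1) * e - b * c)) :=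
      zpow_mul_zpow_of_dvd hM hprim ⟨0, by ring⟩
    have e2 : q ^ (M * (c * M + e - M - (a * M + b))) *
        q ^ ((M : ℤ) ^ 2 * (c - 1) * (a + 1) + M * (a * e - b * (c - 1))) =
        q ^ ((M : ℤ) ^ 2 * c * (a + 1 + 1) + M * ((a + 1) * e - b * c)) :=
      zpow_mul_zpow_of_dvd hM hprim ⟨-(M * (a + 1)), by ring⟩
    rw [chooseZ_succ]
    linear_combination -(qbinom q b e * chooseZ a c) * e1 -
      qbinom q b e * chooseZ a (c - 1) * e2
  · exact qbinomZ_of_neg (by nlinarith) _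
  · simp [chooseZ_of_neg _ hc]
  · rcases lt_trichotomy c 0 with hc | rfl | hc
    · simp [chooseZ_of_neg _ hc, qbinomZ_of_neg (show c * M + e < 0 by nlinarith)]
    · simp [qbinomZ, chooseZ]
    · lift c to ℕ using hc.le
      rw [zero_mul, zero_add, qbinomZ_eq_zero_of_lt (by nlinarith), chooseZ_zero_left hc,
        mul_zero]

end RootOfUnity

end GaussBinom

theorem stmt6_general (M : ℕ) (hM : 1 ≤ M) (q : ℂ)
    (hprim : IsPrimitiveRoot (q ^ 2) M)
    (a : ℤ) (c : ℕ) (b e : ℕ) (hb : b ≤ M - 1) (he : e ≤ M - 1) :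
    qbinom q (a * M + b) (c * M + e) =
      q ^ ((M : ℤ) ^ 2 * (c : ℤ) * (a + 1) + (M : ℤ) * (a * (e : ℤ) - (b : ℤ) * (c : ℤ))) *
        qbinom q (b : ℤ) e * genBinom a c := by
  have h := GaussBinom.qbinomZ_lucas hM hprim (by omega : b < M) (by omega : e < M) a c
  rw [show (c : ℤ) * M + e = (c * M + e : ℕ) by push_cast; rfl] at h
  simp only [GaussBinom.qbinomZ, GaussBinom.chooseZ, Function.extend_natCast_apply] at h
  rwa [GaussBinom.genBinom_eq_choose]

/-- Let `M ≥ 1` and `q ∈ ℂˣ` with `q²` a primitive `M`-th root of unity.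
Then for `a ∈ ℤ`, `c ∈ ℕ` and `0 ≤ b, e ≤ M − 1`,
`[aM+b choose cM+e]_q = q^{M²c(a+1) + M(ae − bc)} [b choose e]_q C(a, c)`. -/
theorem stmt6 (M : ℕ) (hM : 1 ≤ M) (q : ℂ) (hq : q ≠ 0)
    (hprim : IsPrimitiveRoot (q ^ 2) M)
    (a : ℤ) (c : ℕ) (b e : ℕ) (hb : b ≤ M - 1) (he : e ≤ M - 1) :
    qbinom q (a * M + b) (c * M + e) =
      q ^ ((M : ℤ) ^ 2 * (c : ℤ) * (a + 1) + (M : ℤ) * (a * (e : ℤ) - (b : ℤ) * (c : ℤ))) *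
        qbinom q (b : ℤ) e * genBinom a c :=
  stmt6_general M hM q hprim a c b e hb he
end

section
/- Let M ≥ 1 and let q ∈ ℂ^× be such that q² is a primitive M-th root of unity. Then for every integer z ∈ ℤ: [zM choose M]_q = z · q^{M²·(z+1)}. (Consequently the operator H̃ = [X̃⁺, X̃⁻] acts on a vector of weight zM by the integer eigenvalue z.) -/
theorem Polynomial.eval₂_ne_zero_of_dvd {R S : Type*} [CommSemiring R] [CommSemiring S]
    (f : R →+* S) (x : S) {p d : Polynomial R} (h : p ∣ d) (hd : d.eval₂ f x ≠ 0) :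
    p.eval₂ f x ≠ 0 :=
  mt (Polynomial.eval₂_eq_zero_of_dvd_of_eval₂_eq_zero f x h) hd

section

variable {L : Type*} [Field L] {q : L}

theorem zpow_mul_sub_sub_zpow_neg (hq : q ≠ 0) {m : ℤ} (hm : q ^ m * q ^ m = 1) (z b : ℤ) :
    q ^ (z * m - b) - q ^ (-(z * m - b)) = -(q ^ m) ^ z * (q ^ b - q ^ (-b)) := by
  have hinv : ((q ^ m) ^ z)⁻¹ = (q ^ m) ^ z := by
    rw [← inv_zpow, inv_eq_of_mul_eq_one_right hm]
  rw [neg_sub, zpow_sub₀ hq, zpow_sub₀ hq, mul_comm z, zpow_mul, zpow_neg, div_eq_mul_inv,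
    div_eq_mul_inv, hinv]
  ring

theorem zpow_natCast_sub_zpow_neg_ne_zero (hq : q ≠ 0) {b : ℕ} (hb : (q ^ 2) ^ b ≠ 1) :
    q ^ (b : ℤ) - q ^ (-(b : ℤ)) ≠ 0 := by
  rw [sub_ne_zero, zpow_neg, zpow_natCast]
  intro h
  apply hb
  calc (q ^ 2) ^ b = q ^ b * q ^ b := by ring
    _ = q ^ b * (q ^ b)⁻¹ := by nth_rewrite 2 [h]; rfl
    _ = 1 := mul_inv_cancel₀ (pow_ne_zero b hq)

theorem IsPrimitiveRoot.pow_pow_succ_eq_neg_one_pow {M : ℕ} (hprim : IsPrimitiveRoot (q ^ 2) M)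
    (hM : 0 < M) : (q ^ M) ^ (M + 1) = (-1) ^ (M + 1) := by
  rcases Nat.even_or_odd M with ⟨k, hk⟩ | hodd
  · have hk0 : k ≠ 0 := by omega
    have h2 : IsPrimitiveRoot ((q ^ 2) ^ k) 2 := by
      have := hprim.pow_of_dvd hk0 ⟨2, by omega⟩
      rwa [hk, ← two_mul, Nat.mul_div_cancel _ (Nat.pos_of_ne_zero hk0)] at this
    rw [hk, ← two_mul, pow_mul, h2.eq_neg_one_of_two_right]
  · have hsq : (q ^ M) ^ 2 = 1 := by rw [← pow_mul, mul_comm, pow_mul, hprim.pow_eq_one]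
    have heven : Even (M + 1) := Nat.even_add_one.mpr (Nat.not_even_iff_odd.mpr hodd)
    rw [heven.neg_one_pow]
    obtain ⟨k, hk⟩ := heven
    rw [hk, ← two_mul, pow_mul, hsq, one_pow]

theorem zpow_sub_one_mul_neg_zpow_pow {ε : L} (hε : ε ≠ 0) {N : ℕ}
    (hsign : ε ^ (N + 1 + 1) = (-1) ^ (N + 1 + 1)) (z : ℤ) :
    ε ^ (z - 1) * (-ε ^ z) ^ N = ε ^ (((N + 1 : ℕ) : ℤ) * (z + 1)) := by
  rw [show N + 1 + 1 = N + 2 from rfl, pow_add (-1 : L), neg_one_sq, mul_one] at hsign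
  rw [neg_pow, ← hsign, ← zpow_natCast ε (N + 2), ← zpow_natCast (ε ^ z) N, ← zpow_mul,
    ← zpow_add₀ hε, ← zpow_add₀ hε]
  congr 1
  push_cast
  ring

end

namespace RatFunc

universe u

variable {K L : Type u} [Field K] [Field L] (f : K →+* L) (a : L)

theorem denom_neg_dvd (x : RatFunc K) : denom (-x) ∣ denom x :=
  (denom_dvd (denom_ne_zero x)).2 ⟨-num x, by rw [map_neg, neg_div, num_div_denom]⟩

noncomputable def regularAt : Subring (RatFunc K) where
  carrier := {x | (denom x).eval₂ f a ≠ 0}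
  mul_mem' {x y} hx hy := Polynomial.eval₂_ne_zero_of_dvd f a (denom_mul_dvd x y)
    (by rw [Polynomial.eval₂_mul]; exact mul_ne_zero hx hy)
  one_mem' := by simp
  add_mem' {x y} hx hy := Polynomial.eval₂_ne_zero_of_dvd f a (denom_add_dvd x y)
    (by rw [Polynomial.eval₂_mul]; exact mul_ne_zero hx hy)
  zero_mem' := by simp
  neg_mem' {x} hx := Polynomial.eval₂_ne_zero_of_dvd f a (denom_neg_dvd x) hx

noncomputable def evalRingHom : regularAt f a →+* L where
  toFun x := eval f a x
  map_one' := eval_one f a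
  map_mul' x y := eval_mul f a x.2 y.2
  map_zero' := eval_zero f a
  map_add' x y := eval_add f a x.2 y.2

variable {f a}

theorem mem_regularAt {x : RatFunc K} : x ∈ regularAt f a ↔ (denom x).eval₂ f a ≠ 0 := Iff.rfl

@[simp]
theorem evalRingHom_apply (x : regularAt f a) : evalRingHom f a x = eval f a x := rfl

theorem eval_sub_of_mem {x y : RatFunc K} (hx : x ∈ regularAt f a) (hy : y ∈ regularAt f a) :
    eval f a (x - y) = eval f a x - eval f a y := by
  simpa using map_sub (evalRingHom f a) ⟨x, hx⟩ ⟨y, hy⟩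

theorem eval_prod_of_mem {ι : Type*} (s : Finset ι) {g : ι → RatFunc K}
    (hg : ∀ i, g i ∈ regularAt f a) : eval f a (∏ i ∈ s, g i) = ∏ i ∈ s, eval f a (g i) := by
  have h := map_prod (evalRingHom f a) (fun i => ⟨g i, hg i⟩) s
  simp only [evalRingHom_apply, SubmonoidClass.coe_finsetProd] at h
  exact h

theorem inv_mem_regularAt {x : RatFunc K} (hx : x ∈ regularAt f a) (h : eval f a x ≠ 0) :
    x⁻¹ ∈ regularAt f a := by
  have hx0 : x ≠ 0 := by rintro rfl; exact h (eval_zero f a)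
  refine Polynomial.eval₂_ne_zero_of_dvd f a (denom_inv_dvd hx0) fun h0 => h ?_
  rw [eval, h0, zero_div]

theorem eval_inv_of_mem {x : RatFunc K} (hx : x ∈ regularAt f a) (h : eval f a x ≠ 0) :
    eval f a x⁻¹ = (eval f a x)⁻¹ := by
  have hx0 : x ≠ 0 := by rintro rfl; exact h (eval_zero f a)
  refine eq_inv_of_mul_eq_one_right ?_
  rw [← eval_mul f a hx (inv_mem_regularAt hx h), mul_inv_cancel₀ hx0, eval_one]

theorem div_mem_regularAt {x y : RatFunc K} (hx : x ∈ regularAt f a) (hy : y ∈ regularAt f a)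
    (h : eval f a y ≠ 0) : x / y ∈ regularAt f a :=
  div_eq_mul_inv x y ▸ mul_mem hx (inv_mem_regularAt hy h)

theorem eval_div_of_mem {x y : RatFunc K} (hx : x ∈ regularAt f a) (hy : y ∈ regularAt f a)
    (h : eval f a y ≠ 0) : eval f a (x / y) = eval f a x / eval f a y := by
  rw [div_eq_mul_inv, eval_mul f a hx (inv_mem_regularAt hy h), eval_inv_of_mem hy h,
    div_eq_mul_inv]

theorem zpow_mem_regularAt {x : RatFunc K} (hx : x ∈ regularAt f a) (h : eval f a x ≠ 0)
    (k : ℤ) : x ^ k ∈ regularAt f a := by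
  cases k with
  | ofNat n => exact pow_mem hx n
  | negSucc n =>
    rw [zpow_negSucc, ← inv_pow]
    exact pow_mem (inv_mem_regularAt hx h) _

theorem eval_zpow_of_mem {x : RatFunc K} (hx : x ∈ regularAt f a) (h : eval f a x ≠ 0)
    (k : ℤ) : eval f a (x ^ k) = eval f a x ^ k := by
  have hpow (n : ℕ) : eval f a (x ^ n) = eval f a x ^ n := by
    simpa using map_pow (evalRingHom f a) ⟨x, hx⟩ n
  cases k with
  | ofNat n => rw [Int.ofNat_eq_natCast, zpow_natCast, zpow_natCast, hpow]
  | negSucc n =>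
    have hn : eval f a (x ^ (n + 1)) ≠ 0 := hpow (n + 1) ▸ pow_ne_zero _ h
    rw [zpow_negSucc, zpow_negSucc, eval_inv_of_mem (pow_mem hx _) hn, hpow]

theorem X_mem_regularAt : (X : RatFunc K) ∈ regularAt f a := by simp [mem_regularAt]

theorem intDegree_X_zpow (k : ℤ) : intDegree ((X : RatFunc K) ^ k) = k := by
  have hpow (n : ℕ) : intDegree ((X : RatFunc K) ^ n) = n := by
    rw [← algebraMap_X, ← map_pow, intDegree_polynomial, Polynomial.natDegree_X_pow]
  cases k with
  | ofNat n => rw [Int.ofNat_eq_natCast, zpow_natCast, hpow]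
  | negSucc n => rw [zpow_negSucc, intDegree_inv, hpow, Int.negSucc_eq]; push_cast; ring

theorem exists_zpow_sub_zpow_neg_eq_mul {y : RatFunc K} (hy : y ∈ regularAt f a)
    (hε : eval f a y * eval f a y = 1) (z : ℤ) :
    ∃ G ∈ regularAt f a, y ^ z - y ^ (-z) = (y - y⁻¹) * G ∧
      eval f a G = z * eval f a y ^ (z - 1) := by
  generalize hεy : eval f a y = ε at hε ⊢
  have hε0 : ε ≠ 0 := left_ne_zero_of_mul_eq_one hε
  have hyε0 : eval f a y ≠ 0 := hεy ▸ hε0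
  have hy0 : y ≠ 0 := by rintro rfl; exact hyε0 (eval_zero f a)
  have hεinv : ε⁻¹ = ε := inv_eq_of_mul_eq_one_right hε
  have hyinv := inv_mem_regularAt hy hyε0
  induction z using Int.induction_on with
  | zero => exact ⟨0, zero_mem _, by simp, by simp⟩
  | succ i ih =>
    obtain ⟨G, hG, hGy, hGε⟩ := ih
    refine ⟨y * G + y ^ (-(i : ℤ)), add_mem (mul_mem hy hG) (zpow_mem_regularAt hy hyε0 _),
      ?_, ?_⟩
    · simp only [zpow_add_one₀ hy0, zpow_neg, mul_inv] at hGy ⊢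
      linear_combination y * hGy
    · rw [eval_add f a (mul_mem hy hG) (zpow_mem_regularAt hy hyε0 _), eval_mul f a hy hG, hGε,
        eval_zpow_of_mem hy hyε0, hεy]
      simp only [zpow_sub_one₀ hε0, add_sub_cancel_right, zpow_neg, hεinv, ← inv_zpow]
      push_cast
      linear_combination (i : L) * ε ^ (i : ℤ) * hε
  | pred i ih =>
    obtain ⟨G, hG, hGy, hGε⟩ := ih
    refine ⟨y⁻¹ * G - y ^ (i : ℤ), sub_mem (mul_mem hyinv hG) (zpow_mem_regularAt hy hyε0 _),
      ?_, ?_⟩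
    · rw [show -(-(i : ℤ) - 1) = i + 1 by ring]
      simp only [zpow_sub_one₀ hy0, zpow_add_one₀ hy0, neg_neg, zpow_neg] at hGy ⊢
      linear_combination y⁻¹ * hGy
    · rw [eval_sub_of_mem (mul_mem hyinv hG) (zpow_mem_regularAt hy hyε0 _),
        eval_mul f a hyinv hG, eval_inv_of_mem hy hyε0, hGε, eval_zpow_of_mem hy hyε0, hεy]
      simp only [zpow_sub_one₀ hε0, zpow_neg, hεinv, ← inv_zpow]
      push_cast
      linear_combination ε ^ (i : ℤ) * hε

variable (K) in
noncomputable def qdiff (k : ℤ) : RatFunc K := X ^ k - X ^ (-k)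

theorem qdiff_ne_zero {k : ℤ} (hk : k ≠ 0) : qdiff K k ≠ 0 := by
  intro h
  have := congrArg intDegree (sub_eq_zero.mp h)
  rw [intDegree_X_zpow, intDegree_X_zpow] at this
  omega

theorem qdiff_mem_regularAt (ha : a ≠ 0) (k : ℤ) : qdiff K k ∈ regularAt f a :=
  sub_mem (zpow_mem_regularAt X_mem_regularAt (by simpa using ha) k)
    (zpow_mem_regularAt X_mem_regularAt (by simpa using ha) (-k))

theorem eval_qdiff (ha : a ≠ 0) (k : ℤ) : eval f a (qdiff K k) = a ^ k - a ^ (-k) := by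
  have hX : eval f a (X : RatFunc K) ≠ 0 := by simpa using ha
  rw [qdiff, eval_sub_of_mem (zpow_mem_regularAt X_mem_regularAt hX k)
    (zpow_mem_regularAt X_mem_regularAt hX (-k)), eval_zpow_of_mem X_mem_regularAt hX,
    eval_zpow_of_mem X_mem_regularAt hX, eval_X]

theorem exists_qdiff_mul_eq_mul (ha : a ≠ 0) {m : ℤ} (hm : a ^ m * a ^ m = 1) (z : ℤ) :
    ∃ G ∈ regularAt f a, qdiff K (z * m) = qdiff K m * G ∧
      eval f a G = z * (a ^ m) ^ (z - 1) := by
  have hX : eval f a (X : RatFunc K) ≠ 0 := by simpa using ha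
  have hXm : eval f a ((X : RatFunc K) ^ m) = a ^ m := by
    rw [eval_zpow_of_mem X_mem_regularAt hX, eval_X]
  obtain ⟨G, hG, hGX, hGa⟩ :=
    exists_zpow_sub_zpow_neg_eq_mul (zpow_mem_regularAt X_mem_regularAt hX m) (hXm ▸ hm) z
  refine ⟨G, hG, ?_, hXm ▸ hGa⟩
  rw [qdiff, qdiff, mul_comm z, ← mul_neg, zpow_mul, zpow_mul, hGX, zpow_neg]

theorem prod_qdiff_div_range_succ (n : ℤ) (N : ℕ) :
    ∏ s ∈ Finset.range (N + 1), qdiff K (n - s) / qdiff K (s + 1) =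
      qdiff K n / qdiff K (N + 1) *
        ((∏ s ∈ Finset.range N, qdiff K (n - (s + 1))) /
          ∏ s ∈ Finset.range N, qdiff K (s + 1)) := by
  rw [Finset.prod_div_distrib, Finset.prod_range_succ' (fun s : ℕ => qdiff K (n - s)),
    Finset.prod_range_succ (fun s : ℕ => qdiff K (s + 1)), mul_div_mul_comm, mul_comm]
  push_cast
  simp

theorem eval_prod_qdiff_mul_sub_div (ha : a ≠ 0) {N : ℕ}
    (hε : a ^ (N + 1) * a ^ (N + 1) = 1)
    (hden : ∀ s ∈ Finset.range N, a ^ ((s : ℤ) + 1) - a ^ (-((s : ℤ) + 1)) ≠ 0) (z : ℤ) :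
    eval f a (∏ s ∈ Finset.range (N + 1), qdiff K (z * (N + 1 : ℕ) - s) / qdiff K (s + 1)) =
      z * (a ^ (N + 1)) ^ (z - 1) * (-(a ^ (N + 1)) ^ z) ^ N := by
  have hm : a ^ ((N + 1 : ℕ) : ℤ) * a ^ ((N + 1 : ℕ) : ℤ) = 1 := by rwa [zpow_natCast]
  obtain ⟨G, hG, hGq, hGa⟩ := exists_qdiff_mul_eq_mul (f := f) (K := K) ha hm z
  set P := ∏ s ∈ Finset.range N, qdiff K (z * (N + 1 : ℕ) - (s + 1))
  set D := ∏ s ∈ Finset.range N, qdiff K ((s : ℤ) + 1)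
  have hPmem : P ∈ regularAt f a := prod_mem fun s _ => qdiff_mem_regularAt ha _
  have hDmem : D ∈ regularAt f a := prod_mem fun s _ => qdiff_mem_regularAt ha _
  have hD : eval f a D = ∏ s ∈ Finset.range N, (a ^ ((s : ℤ) + 1) - a ^ (-((s : ℤ) + 1))) := by
    rw [eval_prod_of_mem _ fun s => qdiff_mem_regularAt ha _]
    exact Finset.prod_congr rfl fun s _ => eval_qdiff ha _
  have hD0 : eval f a D ≠ 0 := hD ▸ Finset.prod_ne_zero_iff.mpr hden
  have hP : eval f a P = (-(a ^ (N + 1)) ^ z) ^ N * eval f a D := by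
    rw [hD, eval_prod_of_mem _ fun s => qdiff_mem_regularAt ha _,
      show (-(a ^ (N + 1)) ^ z) ^ N = ∏ _s ∈ Finset.range N, -(a ^ (N + 1)) ^ z by simp,
      ← Finset.prod_mul_distrib]
    refine Finset.prod_congr rfl fun s _ => ?_
    rw [eval_qdiff ha, zpow_mul_sub_sub_zpow_neg ha hm, zpow_natCast]
  rw [prod_qdiff_div_range_succ, ← Nat.cast_succ, hGq,
    mul_div_cancel_left₀ _ (qdiff_ne_zero (by omega)),
    eval_mul f a hG (div_mem_regularAt hPmem hDmem hD0), eval_div_of_mem hPmem hDmem hD0, hGa, hP,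
    mul_div_cancel_right₀ _ hD0, zpow_natCast]

end RatFunc

/-- Let `M ≥ 1` and `q ∈ ℂˣ` with `q²` a primitive `M`-th root of unity.
Then for every `z ∈ ℤ`, `[zM choose M]_q = z q^{M²(z+1)}`. -/
theorem stmt7 (M : ℕ) (hM : 1 ≤ M) (q : ℂ) (hq : q ≠ 0)
    (hprim : IsPrimitiveRoot (q ^ 2) M) (z : ℤ) :
    qbinom q (z * M) M = (z : ℂ) * q ^ ((M : ℤ) ^ 2 * (z + 1)) := by
  obtain ⟨N, rfl⟩ : ∃ N, M = N + 1 := ⟨M - 1, by omega⟩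
  have hε : q ^ (N + 1) * q ^ (N + 1) = 1 := by
    rw [← sq, ← pow_mul, mul_comm, pow_mul, hprim.pow_eq_one]
  have hden (s : ℕ) (hs : s ∈ Finset.range N) :
      q ^ ((s : ℤ) + 1) - q ^ (-((s : ℤ) + 1)) ≠ 0 := by
    have := zpow_natCast_sub_zpow_neg_ne_zero hq
      (hprim.pow_ne_one_of_pos_of_lt (l := s + 1) (by omega) (by simpa using hs))
    exact_mod_cast this
  calc qbinom q (z * (N + 1 : ℕ)) (N + 1)
      = z * ((q ^ (N + 1)) ^ (z - 1) * (-(q ^ (N + 1)) ^ z) ^ N) :=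
        (RatFunc.eval_prod_qdiff_mul_sub_div hq hε hden z).trans (mul_assoc _ _ _)
    _ = z * q ^ (((N + 1 : ℕ) : ℤ) ^ 2 * (z + 1)) := by
        rw [zpow_sub_one_mul_neg_zpow_pow (pow_ne_zero _ hq)
          (hprim.pow_pow_succ_eq_neg_one_pow (by omega)), sq, mul_assoc, zpow_mul q, zpow_natCast]
end

section
/- Let n, m be coprime positive integers with m ≥ 3, q = exp(2πi·n/m), and let λ be a nonnegative integer with 2·n·λ < m. On V = ℂ^{λ+1} with standard basis e_0,…,e_λ define linear operators H·e_k = (λ − 2k)·e_k, X⁻·e_k = e_{k+1} (with e_{λ+1} := 0), and X⁺·e_k = [k]_q·[λ−k+1]_q·e_{k−1} (with e_{−1} := 0). Then: (i) H·X^± − X^±·H = ±2·X^± and (X⁺X⁻ − X⁻X⁺)·e_k = [λ−2k]_q·e_k for all k; (ii) for every 1 ≤ j ≤ λ one has [j]_q·[λ−j+1]_q > 0, so the Hermitian inner product defined by ⟨e_k, e_l⟩ = δ_{kl}·∏_{j=1}^{k} [j]_q·[λ−j+1]_q is positive definite; (iii) with respect to this inner product, ⟨X^±·v, w⟩ = ⟨v,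 X^∓·w⟩ and ⟨H·v, w⟩ = ⟨v, H·w⟩ for all v, w ∈ V. Thus V is a finite-dimensional unitary highest-weight representation of the compact real form (X^±)* = X^∓, H* = H of U_q^{fin}(sl₂) at the root of unity q. -/
/-!
At `q = e^{iθ}` the q-integers are real, `[k]_q = sin kθ / sin θ`, and `2nλ < m` puts every angle
`kθ` with `1 ≤ k ≤ λ` in `(0, π)`; hence the coefficients `c_k = [k]_q [λ-k+1]_q` of `X⁺` are
positive. The commutation relations hold for any weighted shift with `c_0 = c_{λ+1} = 0`, the one
for `[X⁺, X⁻]` reducing to `[k+1][λ-k] - [k][λ-k+1] = [λ-2k]`. The diagonal form with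
`⟨e_k, e_k⟩ = c_1 ⋯ c_k` is then positive definite, and `X⁺`, `X⁻` are mutually adjoint because
`⟨X⁺ e_{k+1}, e_k⟩ = c_{k+1} ⟨e_k, e_k⟩ = ⟨e_{k+1}, e_{k+1}⟩ = ⟨e_{k+1}, X⁻ e_k⟩`.
-/

open Complex
open scoped ComplexOrder

/-- When `q - q⁻¹ = 0` (that is, `q² = 1` or `q = 0`) every `qInt q k` is the junk value `0`. -/
def qInt {K : Type*} [Field K] (q : K) (k : ℤ) : K := (q ^ k - q ^ (-k)) / (q - q⁻¹)

def raisingCoeff {K : Type*} [Field K] (q : K) (N k : ℕ) : K :=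
  qInt q k * qInt q ((N : ℤ) - k + 1)

section qInt
variable {K : Type*} [Field K] (q : K)

@[simp]
theorem qInt_zero : qInt q 0 = 0 := by simp [qInt]

theorem qInt_add_one_mul_sub_mul_add_one (a b : ℤ) :
    qInt q (a + 1) * qInt q b - qInt q a * qInt q (b + 1) = qInt q (b - a) := by
  by_cases hd : q - q⁻¹ = 0
  · simp [qInt, hd]
  have hq : q ≠ 0 := by rintro rfl; simp at hd
  have hd' : q ^ 2 - 1 ≠ 0 := by
    contrapose! hd
    field_simp
    linear_combination hd
  simp only [qInt, neg_add, neg_sub, zpow_add₀ hq, zpow_sub₀ hq, zpow_neg, zpow_one]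
  field_simp
  ring

@[simp]
theorem raisingCoeff_zero (N : ℕ) : raisingCoeff q N 0 = 0 := by simp [raisingCoeff]

@[simp]
theorem raisingCoeff_succ_self (N : ℕ) : raisingCoeff q N (N + 1) = 0 := by simp [raisingCoeff]

theorem raisingCoeff_succ_sub (N k : ℕ) :
    raisingCoeff q N (k + 1) - raisingCoeff q N k = qInt q ((N : ℤ) - 2 * k) := by
  have h := qInt_add_one_mul_sub_mul_add_one q k ((N : ℤ) - k)
  rw [show (N : ℤ) - k - k = N - 2 * k by ring] at h
  rw [← h, raisingCoeff, raisingCoeff]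
  push_cast
  ring_nf

end qInt

section exp
variable {θ : ℝ}

theorem qInt_exp_mul_I (θ : ℝ) (k : ℤ) :
    qInt (exp (θ * I)) k = ((Real.sin (k * θ) / Real.sin θ : ℝ) : ℂ) := by
  have hpow : ∀ j : ℤ, exp (θ * I) ^ j - exp (θ * I) ^ (-j) = 2 * Real.sin (j * θ) * I := by
    intro j
    rw [← exp_int_mul, ← exp_int_mul, ← mul_assoc, ← mul_assoc, exp_mul_I, exp_mul_I]
    push_cast
    simp only [neg_mul, cos_neg, sin_neg]
    ring
  have h1 := hpow 1
  simp only [zpow_one, zpow_neg, Int.cast_one, one_mul] at h1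
  rw [qInt, hpow, h1, ofReal_div, mul_div_mul_right _ _ I_ne_zero,
    mul_div_mul_left _ _ two_ne_zero]

theorem qInt_exp_mul_I_pos (hθ : 0 < θ) {k : ℤ} (hk : 1 ≤ k) (hkθ : k * θ < Real.pi) :
    0 < qInt (exp (θ * I)) k := by
  have hk' : (1 : ℝ) ≤ k := by exact_mod_cast hk
  have hθπ : θ < Real.pi := by nlinarith
  rw [qInt_exp_mul_I, zero_lt_real]
  exact div_pos (Real.sin_pos_of_pos_of_lt_pi (by positivity) hkθ)
    (Real.sin_pos_of_pos_of_lt_pi hθ hθπ)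

theorem raisingCoeff_exp_mul_I_pos (hθ : 0 < θ) {N : ℕ} (hN : N * θ < Real.pi) {j : ℕ}
    (hj : 1 ≤ j) (hjN : j ≤ N) : 0 < raisingCoeff (exp (θ * I)) N j := by
  have hle : ∀ i : ℤ, i ≤ N → i * θ < Real.pi := fun i hi =>
    lt_of_le_of_lt (mul_le_mul_of_nonneg_right (by exact_mod_cast hi) hθ.le) hN
  exact mul_pos (qInt_exp_mul_I_pos hθ (k := j) (by omega) (hle _ (by omega)))
    (qInt_exp_mul_I_pos hθ (k := N - j + 1) (by omega) (hle _ (by omega)))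

theorem conj_raisingCoeff_exp_mul_I (θ : ℝ) (N k : ℕ) :
    starRingEnd ℂ (raisingCoeff (exp (θ * I)) N k) = raisingCoeff (exp (θ * I)) N k := by
  simp only [raisingCoeff, qInt_exp_mul_I, map_mul, conj_ofReal]

end exp

def basisVec (R : Type*) [Semiring R] (N k : ℕ) : Fin (N + 1) → R :=
  if h : k < N + 1 then Pi.single ⟨k, h⟩ 1 else 0

section basisVec
variable {R : Type*} [Semiring R] {N : ℕ}

theorem basisVec_apply (k : ℕ) (i : Fin (N + 1)) :
    basisVec R N k i = if k = i then 1 else 0 := by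
  unfold basisVec
  split_ifs with hk hki hki <;> simp_all [Fin.ext_iff]
  omega

theorem basisVec_coe (i : Fin (N + 1)) : basisVec R N i = Pi.single i 1 := by
  simp [basisVec, i.isLt]

@[simp]
theorem basisVec_succ_self : basisVec R N (N + 1) = 0 := by simp [basisVec]

theorem linearMap_ext_basisVec {M : Type*} [AddCommMonoid M] [Module R M]
    {T S : (Fin (N + 1) → R) →ₗ[R] M}
    (h : ∀ k ≤ N, T (basisVec R N k) = S (basisVec R N k)) : T = S :=
  (Pi.basisFun R _).ext fun i => by simpa [basisVec_coe] using h i (by omega)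

end basisVec

section commutator
variable {R : Type*} [CommRing R] {N : ℕ} {H Xp Xm : (Fin (N + 1) → R) →ₗ[R] (Fin (N + 1) → R)}
  {c : ℕ → R}

theorem commutator_weight_raising (hc : c 0 = 0)
    (hH : ∀ k ≤ N, H (basisVec R N k) = ((N : R) - 2 * k) • basisVec R N k)
    (hXp : ∀ k ≤ N, Xp (basisVec R N k) = c k • basisVec R N (k - 1)) :
    H ∘ₗ Xp - Xp ∘ₗ H = (2 : R) • Xp := by
  refine linearMap_ext_basisVec fun k hk => ?_
  simp only [LinearMap.sub_apply, LinearMap.comp_apply, LinearMap.smul_apply, hH k hk, hXp k hk,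
    map_smul]
  rcases k with _ | k
  · simp [hc]
  · rw [Nat.add_sub_cancel, hH k (by omega), smul_smul, smul_smul, smul_smul, ← sub_smul]
    congr 1
    push_cast
    ring

theorem commutator_weight_lowering
    (hH : ∀ k ≤ N, H (basisVec R N k) = ((N : R) - 2 * k) • basisVec R N k)
    (hXm : ∀ k ≤ N, Xm (basisVec R N k) = basisVec R N (k + 1)) :
    H ∘ₗ Xm - Xm ∘ₗ H = (-2 : R) • Xm := by
  refine linearMap_ext_basisVec fun k hk => ?_
  simp only [LinearMap.sub_apply, LinearMap.comp_apply, LinearMap.smul_apply, hH k hk, hXm k hk,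
    map_smul]
  obtain rfl | hk := hk.eq_or_lt
  · simp
  · rw [hH (k + 1) hk, ← sub_smul]
    congr 1
    push_cast
    ring

theorem commutator_raising_lowering_basisVec (hc : c 0 = 0) (hcN : c (N + 1) = 0)
    (hXp : ∀ k ≤ N, Xp (basisVec R N k) = c k • basisVec R N (k - 1))
    (hXm : ∀ k ≤ N, Xm (basisVec R N k) = basisVec R N (k + 1)) {k : ℕ} (hk : k ≤ N) :
    Xp (Xm (basisVec R N k)) - Xm (Xp (basisVec R N k)) = (c (k + 1) - c k) • basisVec R N k := by
  have hXpXm : Xp (Xm (basisVec R N k)) = c (k + 1) • basisVec R N k := by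
    obtain rfl | hk := hk.eq_or_lt
    · simp [hXm, hcN]
    · rw [hXm k hk.le, hXp (k + 1) hk, Nat.add_sub_cancel]
  have hXmXp : Xm (Xp (basisVec R N k)) = c k • basisVec R N k := by
    rcases k with _ | k
    · simp [hXp, hc]
    · rw [hXp (k + 1) hk, map_smul, Nat.add_sub_cancel, hXm k (by omega)]
  rw [hXpXm, hXmXp, sub_smul]

end commutator

def weightedForm (N : ℕ) (g : ℕ → ℂ) :
    (Fin (N + 1) → ℂ) →ₗ⋆[ℂ] (Fin (N + 1) → ℂ) →ₗ[ℂ] ℂ :=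
  LinearMap.mk₂'ₛₗ (starRingEnd ℂ) (RingHom.id ℂ)
    (fun v w => ∑ k : Fin (N + 1), starRingEnd ℂ (v k) * w k * g k)
    (fun _ _ _ => by simp only [Pi.add_apply, map_add, add_mul, Finset.sum_add_distrib])
    (fun _ _ _ => by simp only [Pi.smul_apply, smul_eq_mul, map_mul, Finset.mul_sum, mul_assoc])
    (fun _ _ _ => by simp only [Pi.add_apply, mul_add, add_mul, Finset.sum_add_distrib])
    (fun _ _ _ => by
      simp only [Pi.smul_apply, smul_eq_mul, RingHom.id_apply, Finset.mul_sum]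
      exact Finset.sum_congr rfl fun _ _ => by ring)

section weightedForm
variable {N : ℕ} {g : ℕ → ℂ}

theorem weightedForm_apply (v w : Fin (N + 1) → ℂ) :
    weightedForm N g v w = ∑ k : Fin (N + 1), starRingEnd ℂ (v k) * w k * g k := rfl

theorem weightedForm_basisVec {k : ℕ} (hk : k ≤ N) (l : ℕ) :
    weightedForm N g (basisVec ℂ N k) (basisVec ℂ N l) = if k = l then g k else 0 := by
  rw [weightedForm_apply, Finset.sum_eq_single ⟨k, by omega⟩]
  · simp [basisVec_apply, eq_comm]
  · intro i _ hi
    simp [basisVec_apply, Fin.ext_iff] at hi ⊢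
    omega
  · simp

theorem conj_weightedForm (hg : ∀ k, starRingEnd ℂ (g k) = g k) (v w : Fin (N + 1) → ℂ) :
    starRingEnd ℂ (weightedForm N g v w) = weightedForm N g w v := by
  simp only [weightedForm_apply, map_sum, map_mul, hg, Complex.conj_conj]
  exact Finset.sum_congr rfl fun _ _ => by ring

theorem weightedForm_self_pos (hg : ∀ k ≤ N, 0 < g k) {v : Fin (N + 1) → ℂ} (hv : v ≠ 0) :
    0 < weightedForm N g v v := by
  obtain ⟨i, hi⟩ := Function.ne_iff.mp hv
  have hgi : ∀ i : Fin (N + 1), 0 < g i := fun i => hg i (by omega)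
  rw [weightedForm_apply]
  refine Finset.sum_pos' (fun j _ => mul_nonneg (star_mul_self_nonneg _) (hgi j).le)
    ⟨i, Finset.mem_univ _, mul_pos ?_ (hgi i)⟩
  rwa [← Complex.normSq_eq_conj_mul_self, zero_lt_real, Complex.normSq_pos]

theorem weightedForm_adjoint_of_basisVec {T S : (Fin (N + 1) → ℂ) →ₗ[ℂ] (Fin (N + 1) → ℂ)}
    (h : ∀ i ≤ N, ∀ j ≤ N, weightedForm N g (T (basisVec ℂ N i)) (basisVec ℂ N j) =
      weightedForm N g (basisVec ℂ N i) (S (basisVec ℂ N j)))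
    (v w : Fin (N + 1) → ℂ) : weightedForm N g (T v) w = weightedForm N g v (S w) := by
  have hTS : (weightedForm N g).comp T = (weightedForm N g).compl₂ S :=
    LinearMap.ext_basis (Pi.basisFun ℂ (Fin (N + 1))) (Pi.basisFun ℂ (Fin (N + 1)))
      fun i j => by simpa [basisVec_coe] using h i (by omega) j (by omega)
  exact LinearMap.congr_fun₂ hTS v w

theorem weightedForm_weight_eq {H : (Fin (N + 1) → ℂ) →ₗ[ℂ] (Fin (N + 1) → ℂ)}
    (hH : ∀ k ≤ N, H (basisVec ℂ N k) = ((N : ℂ) - 2 * k) • basisVec ℂ N k)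
    (v w : Fin (N + 1) → ℂ) : weightedForm N g (H v) w = weightedForm N g v (H w) := by
  refine weightedForm_adjoint_of_basisVec (fun i hi j hj => ?_) v w
  rw [hH i hi, hH j hj, LinearMap.map_smulₛₗ₂, map_smul, weightedForm_basisVec hi]
  split_ifs with hij
  · subst hij; simp [map_ofNat]
  · simp

end weightedForm

def shiftWeight (c : ℕ → ℂ) (k : ℕ) : ℂ := ∏ j ∈ Finset.range k, c (j + 1)

section shiftWeight
variable {c : ℕ → ℂ}

theorem shiftWeight_succ (k : ℕ) : shiftWeight c (k + 1) = shiftWeight c k * c (k + 1) :=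
  Finset.prod_range_succ _ _

theorem conj_shiftWeight (hc : ∀ k, starRingEnd ℂ (c k) = c k) (k : ℕ) :
    starRingEnd ℂ (shiftWeight c k) = shiftWeight c k := by
  simp [shiftWeight, map_prod, hc]

theorem shiftWeight_pos {N : ℕ} (hc : ∀ j, 1 ≤ j → j ≤ N → 0 < c j) {k : ℕ} (hk : k ≤ N) :
    0 < shiftWeight c k :=
  Finset.prod_pos fun j hj => hc (j + 1) (by omega) (by simp at hj; omega)

variable {N : ℕ} {Xp Xm : (Fin (N + 1) → ℂ) →ₗ[ℂ] (Fin (N + 1) → ℂ)}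

theorem weightedForm_raising_eq (hc : c 0 = 0) (hreal : ∀ k, starRingEnd ℂ (c k) = c k)
    (hXp : ∀ k ≤ N, Xp (basisVec ℂ N k) = c k • basisVec ℂ N (k - 1))
    (hXm : ∀ k ≤ N, Xm (basisVec ℂ N k) = basisVec ℂ N (k + 1)) (v w : Fin (N + 1) → ℂ) :
    weightedForm N (shiftWeight c) (Xp v) w = weightedForm N (shiftWeight c) v (Xm w) := by
  refine weightedForm_adjoint_of_basisVec (fun i hi j hj => ?_) v w
  rw [hXp i hi, hXm j hj, LinearMap.map_smulₛₗ₂, weightedForm_basisVec (by omega),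
    weightedForm_basisVec hi]
  rcases i with _ | i
  · simp [hc]
  · simp only [Nat.add_sub_cancel, Nat.add_right_cancel_iff, shiftWeight_succ, hreal, smul_eq_mul]
    split_ifs <;> ring

theorem weightedForm_lowering_eq (hc : c 0 = 0) (hreal : ∀ k, starRingEnd ℂ (c k) = c k)
    (hXp : ∀ k ≤ N, Xp (basisVec ℂ N k) = c k • basisVec ℂ N (k - 1))
    (hXm : ∀ k ≤ N, Xm (basisVec ℂ N k) = basisVec ℂ N (k + 1)) (v w : Fin (N + 1) → ℂ) :
    weightedForm N (shiftWeight c) (Xm v) w = weightedForm N (shiftWeight c) v (Xp w) := by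
  rw [← conj_weightedForm (conj_shiftWeight hreal), ← weightedForm_raising_eq hc hreal hXp hXm,
    conj_weightedForm (conj_shiftWeight hreal)]

end shiftWeight

theorem stmt10_general (n m : ℕ) (hn : 0 < n)
    (q : ℂ) (hq : q = Complex.exp (2 * Real.pi * Complex.I * n / m))
    (lam : ℕ) (hlam : 2 * n * lam < m)
    (qint : ℤ → ℂ) (hqint : ∀ k : ℤ, qint k = (q ^ k - q ^ (-k)) / (q - q⁻¹))
    (e : ℕ → Fin (lam + 1) → ℂ)
    (he : ∀ k : ℕ, e k =
      if h : k < lam + 1 then Pi.single (⟨k, h⟩ : Fin (lam + 1)) (1 : ℂ) else 0)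
    (H Xp Xm : (Fin (lam + 1) → ℂ) →ₗ[ℂ] (Fin (lam + 1) → ℂ))
    (hH : ∀ k : ℕ, k ≤ lam → H (e k) = ((lam : ℂ) - 2 * k) • e k)
    (hXm : ∀ k : ℕ, k ≤ lam → Xm (e k) = e (k + 1))
    (hXp : ∀ k : ℕ, k ≤ lam →
      Xp (e k) = (qint k * qint ((lam : ℤ) - k + 1)) • e (k - 1))
    (g : ℕ → ℂ)
    (hg : ∀ k : ℕ, g k = ∏ j ∈ Finset.range k, qint (j + 1) * qint ((lam : ℤ) - (j + 1) + 1))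
    (B : (Fin (lam + 1) → ℂ) → (Fin (lam + 1) → ℂ) → ℂ)
    (hB : ∀ v w, B v w = ∑ k : Fin (lam + 1), (starRingEnd ℂ) (v k) * w k * g (k : ℕ)) :
    -- (i) commutation relations
    (H ∘ₗ Xp - Xp ∘ₗ H = (2 : ℂ) • Xp) ∧
    (H ∘ₗ Xm - Xm ∘ₗ H = (-2 : ℂ) • Xm) ∧
    (∀ k : ℕ, k ≤ lam →
      Xp (Xm (e k)) - Xm (Xp (e k)) = qint ((lam : ℤ) - 2 * k) • e k) ∧
    -- (ii) positivity
    (∀ j : ℕ, 1 ≤ j → j ≤ lam →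
      (qint j * qint ((lam : ℤ) - j + 1)).im = 0 ∧
      0 < (qint j * qint ((lam : ℤ) - j + 1)).re) ∧
    (∀ k l : ℕ, k ≤ lam → l ≤ lam → B (e k) (e l) = if k = l then g k else 0) ∧
    (∀ v : Fin (lam + 1) → ℂ, v ≠ 0 → (B v v).im = 0 ∧ 0 < (B v v).re) ∧
    -- (iii) unitarity for the compact real form
    (∀ v w, B (Xp v) w = B v (Xm w)) ∧
    (∀ v w, B (Xm v) w = B v (Xp w)) ∧
    (∀ v w, B (H v) w = B v (H w)) := by
  set θ : ℝ := 2 * Real.pi * n / m with hθdef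
  have hm : (0 : ℝ) < m := by exact_mod_cast (show 0 < m by omega)
  have hθ : 0 < θ := div_pos (mul_pos Real.two_pi_pos (by exact_mod_cast hn)) hm
  have hlamθ : lam * θ < Real.pi := by
    have : (2 * n * lam : ℝ) < m := by exact_mod_cast hlam
    rw [show lam * θ = Real.pi * (2 * n * lam / m) by ring]
    exact mul_lt_of_lt_one_right Real.pi_pos ((div_lt_one hm).mpr this)
  obtain rfl : q = exp (θ * I) := by rw [hq, hθdef]; push_cast; ring_nf
  obtain rfl : qint = qInt (exp (θ * I)) := funext hqint
  set c := raisingCoeff (exp (θ * I)) lam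
  obtain rfl : e = basisVec ℂ lam := funext he
  obtain rfl : g = shiftWeight c := funext fun k => by simp [hg, shiftWeight, c, raisingCoeff]
  obtain rfl : B = fun v w => weightedForm lam (shiftWeight c) v w := funext₂ hB
  have hc0 : c 0 = 0 := raisingCoeff_zero _ _
  have hreal : ∀ k, starRingEnd ℂ (c k) = c k := conj_raisingCoeff_exp_mul_I θ lam
  have hpos : ∀ j, 1 ≤ j → j ≤ lam → 0 < c j := fun j => raisingCoeff_exp_mul_I_pos hθ hlamθ
  have re_im_of_pos : ∀ z : ℂ, 0 < z → z.im = 0 ∧ 0 < z.re := fun z hz =>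
    ⟨(Complex.pos_iff.mp hz).2.symm, (Complex.pos_iff.mp hz).1⟩
  refine ⟨commutator_weight_raising hc0 hH hXp, commutator_weight_lowering hH hXm,
    fun k hk => ?_, fun j hj hjl => re_im_of_pos _ (hpos j hj hjl),
    fun k l hk _ => weightedForm_basisVec hk l,
    fun v hv => re_im_of_pos _ (weightedForm_self_pos (fun _ => shiftWeight_pos hpos) hv),
    weightedForm_raising_eq hc0 hreal hXp hXm, weightedForm_lowering_eq hc0 hreal hXp hXm,
    weightedForm_weight_eq hH⟩
  rw [commutator_raising_lowering_basisVec hc0 (raisingCoeff_succ_self _ _) hXp hXm hk,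
    raisingCoeff_succ_sub]

/-- For coprime `n, m` with `m ≥ 3`, `q = exp(2πi n/m)`, and `0 ≤ λ` with
`2nλ < m`, the operators `H, X⁺, X⁻` on `V = ℂ^{λ+1}` defined on the standard basis by
`H e_k = (λ − 2k) e_k`, `X⁻ e_k = e_{k+1}` (`e_{λ+1} := 0`), `X⁺ e_k = [k][λ−k+1] e_{k−1}`
satisfy (i) the `U_q(sl₂)`-commutation relations, (ii) the coefficients `[j][λ−j+1]`
(`1 ≤ j ≤ λ`) are positive reals, so the Hermitian form with `⟨e_k, e_l⟩ = δ_{kl}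
∏_{j=1}^k [j][λ−j+1]` is positive definite, and (iii) `⟨X^± v, w⟩ = ⟨v, X^∓ w⟩`,
`⟨H v, w⟩ = ⟨v, H w⟩`: a finite-dimensional unitary highest-weight representation of the
compact real form of `U_q^{fin}(sl₂)`. -/
theorem stmt10 (n m : ℕ) (hn : 0 < n) (hm : 3 ≤ m) (hcop : Nat.Coprime n m)
    (q : ℂ) (hq : q = Complex.exp (2 * Real.pi * Complex.I * n / m))
    (lam : ℕ) (hlam : 2 * n * lam < m)
    (qint : ℤ → ℂ) (hqint : ∀ k : ℤ, qint k = (q ^ k - q ^ (-k)) / (q - q⁻¹))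
    (e : ℕ → Fin (lam + 1) → ℂ)
    (he : ∀ k : ℕ, e k =
      if h : k < lam + 1 then Pi.single (⟨k, h⟩ : Fin (lam + 1)) (1 : ℂ) else 0)
    (H Xp Xm : (Fin (lam + 1) → ℂ) →ₗ[ℂ] (Fin (lam + 1) → ℂ))
    (hH : ∀ k : ℕ, k ≤ lam → H (e k) = ((lam : ℂ) - 2 * k) • e k)
    (hXm : ∀ k : ℕ, k ≤ lam → Xm (e k) = e (k + 1))
    (hXp : ∀ k : ℕ, k ≤ lam →
      Xp (e k) = (qint k * qint ((lam : ℤ) - k + 1)) • e (k - 1))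
    (g : ℕ → ℂ)
    (hg : ∀ k : ℕ, g k = ∏ j ∈ Finset.range k, qint (j + 1) * qint ((lam : ℤ) - (j + 1) + 1))
    (B : (Fin (lam + 1) → ℂ) → (Fin (lam + 1) → ℂ) → ℂ)
    (hB : ∀ v w, B v w = ∑ k : Fin (lam + 1), (starRingEnd ℂ) (v k) * w k * g (k : ℕ)) :
    -- (i) commutation relations
    (H ∘ₗ Xp - Xp ∘ₗ H = (2 : ℂ) • Xp) ∧
    (H ∘ₗ Xm - Xm ∘ₗ H = (-2 : ℂ) • Xm) ∧
    (∀ k : ℕ, k ≤ lam →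
      Xp (Xm (e k)) - Xm (Xp (e k)) = qint ((lam : ℤ) - 2 * k) • e k) ∧
    -- (ii) positivity
    (∀ j : ℕ, 1 ≤ j → j ≤ lam →
      (qint j * qint ((lam : ℤ) - j + 1)).im = 0 ∧
      0 < (qint j * qint ((lam : ℤ) - j + 1)).re) ∧
    (∀ k l : ℕ, k ≤ lam → l ≤ lam → B (e k) (e l) = if k = l then g k else 0) ∧
    (∀ v : Fin (lam + 1) → ℂ, v ≠ 0 → (B v v).im = 0 ∧ 0 < (B v v).re) ∧
    -- (iii) unitarity for the compact real form
    (∀ v w, B (Xp v) w = B v (Xm w)) ∧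
    (∀ v w, B (Xm v) w = B v (Xp w)) ∧
    (∀ v w, B (H v) w = B v (H w)) :=
  stmt10_general n m hn q hq lam hlam qint hqint e he H Xp Xm hH hXm hXp g hg B hB
end
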